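/- (Conditional von Mises expansion.) For every t ∈ {0, 1,…,τ−1}, every s̄_t ∈ 𝒮_t and every (a_t, h_t) ∈ 𝒜_t × ℋ_t: E[φ_{t+1}(s̄_t, Z; η′) ∣ A_t = a_t, H_t = h_t] = m_t(s̄_t, a_t, h_t) + Rem_t(s̄_t, a_t, h_t; η′), where m_t are the true sequential regression functions, and for t = 0 the conditioning is omitted, m_0 is the parameter θ = E[q_1(A_1, H_1)], and s̄_0 is the empty tuple. -/

import Mathlib

open MeasureTheory Finset

set_option linter.unusedSectionVars false
set_option maxHeartbeats 1000000
namespace GLMTP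

variable {τ : ℕ}

/-- Augmented natural-treatment history: one treatment value for each time index `< tp`
(0-based; the paper's `s̄_t` corresponds to `tp = t`). -/
abbrev SbarN (𝓐 : Fin τ → Type) (tp : ℕ) : Type :=
  ∀ s : {s : Fin τ // s.val < tp}, 𝓐 s.1

/-- Observed history `H_t = (L_1, A_1, …, A_{t-1}, L_t)`: covariates up to (and including)
time `t` and treatments strictly before time `t`. -/
abbrev Hist (𝓐 𝓛 : Fin τ → Type) (t : Fin τ) : Type :=
  (∀ s : {s : Fin τ // s ≤ t}, 𝓛 s.1) × (∀ s : {s : Fin τ // s < t}, 𝓐 s.1)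

/-- A generalized longitudinal modified treatment policy: at each time `t` it maps the
history of natural treatment values `(a_1, …, a_t)` and the history `h_t` to a treatment. -/
abbrev Policy (𝓐 𝓛 : Fin τ → Type) : Type :=
  ∀ t : Fin τ, SbarN 𝓐 (t.val + 1) → Hist 𝓐 𝓛 t → 𝓐 t

variable {𝓐 𝓛 : Fin τ → Type}

/-- The empty augmented history `s̄_0`. -/
def emptySbar (𝓐 : Fin τ → Type) : SbarN 𝓐 0 :=
  fun s => absurd s.2 (Nat.not_lt_zero _)

def restrictSb {tp tp' : ℕ} (h : tp' ≤ tp) (sb : SbarN 𝓐 tp) : SbarN 𝓐 tp' :=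
  fun s => sb ⟨s.1, lt_of_lt_of_le s.2 h⟩

/-- Append a treatment value at time `t` to an augmented history `s̄_{t-1}`. -/
def snoc {t : Fin τ} (sb : SbarN 𝓐 t.val) (a : 𝓐 t) : SbarN 𝓐 (t.val + 1) :=
  fun s =>
    if h : s.1 = t then cast (congrArg 𝓐 h).symm a
    else sb ⟨s.1, lt_of_le_of_ne (Nat.lt_succ_iff.mp s.2) (fun hv => h (Fin.ext hv))⟩

/-- Extension of an augmented history: treatment values at times `tp ≤ u ≤ k` (0-based),
i.e. the summation variables `s_{t+1}, …, s_k` of the paper. -/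
abbrev Ext (𝓐 : Fin τ → Type) (tp : ℕ) (k : Fin τ) : Type :=
  ∀ s : {s : Fin τ // tp ≤ s.val ∧ s.val ≤ k.val}, 𝓐 s.1

def mergeExt {tp : ℕ} {k : Fin τ} (sb : SbarN 𝓐 tp) (e : Ext 𝓐 tp k) :
    SbarN 𝓐 (k.val + 1) :=
  fun s =>
    if h : s.1.val < tp then sb ⟨s.1, h⟩
    else e ⟨s.1, ⟨not_lt.mp h, Nat.lt_succ_iff.mp s.2⟩⟩

/-- The observed data structure `Z = (L_1, A_1, …, L_τ, A_τ, Y)` with its law `μ`. -/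
structure Model (𝓐 𝓛 : Fin τ → Type) (Ω : Type) [MeasurableSpace Ω] where
  μ : Measure Ω
  L : ∀ t : Fin τ, Ω → 𝓛 t
  A : ∀ t : Fin τ, Ω → 𝓐 t
  Y : Ω → ℝ

variable {Ω : Type} [MeasurableSpace Ω]

/-- The observed history process `ω ↦ H_t(ω)`. -/
def Model.Hproc (M : Model 𝓐 𝓛 Ω) (t : Fin τ) (ω : Ω) : Hist 𝓐 𝓛 t :=
  (fun s => M.L s.1 ω, fun s => M.A s.1 ω)

/-- The event `{H_t = h}`. -/
def Model.histEvent (M : Model 𝓐 𝓛 Ω) (t : Fin τ) (h : Hist 𝓐 𝓛 t) : Set Ω :=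
  {ω | M.Hproc t ω = h}

/-- The event `{A_t = a, H_t = h}`. -/
def Model.condEvent (M : Model 𝓐 𝓛 Ω) (t : Fin τ) (a : 𝓐 t) (h : Hist 𝓐 𝓛 t) : Set Ω :=
  {ω | M.A t ω = a} ∩ M.histEvent t h

/-- Conditional expectation given an event, defined as a ratio. -/
noncomputable def condExpOn (μ : Measure Ω) (S : Set Ω) (X : Ω → ℝ) : ℝ :=
  (∫ ω in S, X ω ∂μ) / (μ S).toReal

/-- The true treatment mechanism `g_t(a ∣ h) = P(A_t = a ∣ H_t = h)`. -/
noncomputable def Model.g (M : Model 𝓐 𝓛 Ω) (t : Fin τ) (a : 𝓐 t) (h : Hist 𝓐 𝓛 t) : ℝ :=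
  (M.μ (M.condEvent t a h)).toReal / (M.μ (M.histEvent t h)).toReal

/-- Full positivity: `P(A_t = a, H_t = h) > 0` for every `t`, `a`, `h`. -/
def Model.Positivity (M : Model 𝓐 𝓛 Ω) : Prop :=
  ∀ (t : Fin τ) (a : 𝓐 t) (h : Hist 𝓐 𝓛 t), 0 < M.μ (M.condEvent t a h)

/-- Measurability of the observed variables. -/
def Model.Meas (M : Model 𝓐 𝓛 Ω) : Prop :=
  (∀ (t : Fin τ) (a : 𝓐 t), MeasurableSet {ω | M.A t ω = a}) ∧
  (∀ (t : Fin τ) (l : 𝓛 t), MeasurableSet {ω | M.L t ω = l}) ∧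
  Measurable M.Y

/-- `q_t` obtained from `m_t`:
`q_t(s̄_{t-1}, a_t, h_t) = m_t((s̄_{t-1},a_t), d_t((s̄_{t-1},a_t), h_t), h_t)`. -/
def qOf (d : Policy 𝓐 𝓛)
    (m : ∀ t : Fin τ, SbarN 𝓐 (t.val + 1) → 𝓐 t → Hist 𝓐 𝓛 t → ℝ)
    (t : Fin τ) (sb : SbarN 𝓐 t.val) (a : 𝓐 t) (h : Hist 𝓐 𝓛 t) : ℝ :=
  m t (snoc sb a) (d t (snoc sb a) h) h

/-- `ω ↦ q_{k+1}(s̄_k, A_{k+1}(ω), H_{k+1}(ω))`, with the convention `q_{τ+1} := Y`. -/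
def Model.qNext (M : Model 𝓐 𝓛 Ω)
    (q : ∀ t : Fin τ, SbarN 𝓐 t.val → 𝓐 t → Hist 𝓐 𝓛 t → ℝ)
    (k : Fin τ) (sb : SbarN 𝓐 (k.val + 1)) (ω : Ω) : ℝ :=
  if h : k.val + 1 < τ then
    q ⟨k.val + 1, h⟩ sb (M.A ⟨k.val + 1, h⟩ ω) (M.Hproc ⟨k.val + 1, h⟩ ω)
  else M.Y ω

/-- `m` is the (true) sequential-regression family for the policy `d`:
`m_t(s̄_t, a_t, h_t) = E[q_{t+1}(s̄_t, A_{t+1}, H_{t+1}) ∣ A_t = a_t, H_t = h_t]`,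
with `q_{τ+1} = Y` (so at `t = τ` this reads `m_τ(a_τ,h_τ) = E[Y ∣ A_τ = a_τ, H_τ = h_τ]`,
extended independently of `s̄_τ`). -/
def IsSeqReg (M : Model 𝓐 𝓛 Ω) (d : Policy 𝓐 𝓛)
    (m : ∀ t : Fin τ, SbarN 𝓐 (t.val + 1) → 𝓐 t → Hist 𝓐 𝓛 t → ℝ) : Prop :=
  ∀ (t : Fin τ) (sb : SbarN 𝓐 (t.val + 1)) (a : 𝓐 t) (h : Hist 𝓐 𝓛 t),
    m t sb a h = condExpOn M.μ (M.condEvent t a h) (M.qNext (qOf d m) t sb)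

/-- The parameter `θ = E[q_1(A_1, H_1)]`. -/
noncomputable def theta (hτ : 0 < τ) (M : Model 𝓐 𝓛 Ω) (d : Policy 𝓐 𝓛)
    (m : ∀ t : Fin τ, SbarN 𝓐 (t.val + 1) → 𝓐 t → Hist 𝓐 𝓛 t → ℝ) : ℝ :=
  ∫ ω, qOf d m ⟨0, hτ⟩ (emptySbar 𝓐) (M.A ⟨0, hτ⟩ ω) (M.Hproc ⟨0, hτ⟩ ω) ∂M.μ

variable [∀ t, DecidableEq (𝓐 t)] [∀ t, Fintype (𝓐 t)]

/-- Indicator `D_{t,k}(s̄_k)`: all treatments at times `tp ≤ u ≤ k` (0-based) follow the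
policy applied to the augmented history. -/
noncomputable def Dind (M : Model 𝓐 𝓛 Ω) (d : Policy 𝓐 𝓛) (tp : ℕ) (k : Fin τ)
    (sb : SbarN 𝓐 (k.val + 1)) (ω : Ω) : ℝ :=
  ∏ u : Fin τ,
    if hu : tp ≤ u.val ∧ u.val ≤ k.val then
      (if M.A u ω = d u (restrictSb (Nat.succ_le_succ hu.2) sb) (M.Hproc u ω) then 1 else 0)
    else 1

/-- Density-ratio weight `∏_{u} g'_u(s_u ∣ H_u)/g'_u(A_u ∣ H_u)` over times `tp ≤ u ≤ k`. -/
noncomputable def weight (M : Model 𝓐 𝓛 Ω) (g' : ∀ t : Fin τ, 𝓐 t → Hist 𝓐 𝓛 t → ℝ)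
    (tp : ℕ) (k : Fin τ) (sb : SbarN 𝓐 (k.val + 1)) (ω : Ω) : ℝ :=
  ∏ u : Fin τ,
    if hu : tp ≤ u.val ∧ u.val ≤ k.val then
      g' u (sb ⟨u, Nat.lt_succ_of_le hu.2⟩) (M.Hproc u ω) / g' u (M.A u ω) (M.Hproc u ω)
    else 1

/-- The pseudo-outcome `φ_{t+1}(s̄_t, Z; η')`; here `tp` is the paper's `t` (so times are
0-based internally: the paper's time `u` is the index `u - 1`). -/
noncomputable def phi (M : Model 𝓐 𝓛 Ω) (d : Policy 𝓐 𝓛)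
    (g' : ∀ t : Fin τ, 𝓐 t → Hist 𝓐 𝓛 t → ℝ)
    (m' : ∀ t : Fin τ, SbarN 𝓐 (t.val + 1) → 𝓐 t → Hist 𝓐 𝓛 t → ℝ)
    (tp : ℕ) (sb : SbarN 𝓐 tp) (ω : Ω) : ℝ :=
  (∑ k : Fin τ,
    if tp ≤ k.val then
      ∑ e : Ext 𝓐 tp k,
        Dind M d tp k (mergeExt sb e) ω * weight M g' tp k (mergeExt sb e) ω *
          (M.qNext (qOf d m') k (mergeExt sb e) ω -
            m' k (mergeExt sb e) (M.A k ω) (M.Hproc k ω))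
    else 0) +
  (if h : tp < τ then
      qOf d m' ⟨tp, h⟩ sb (M.A ⟨tp, h⟩ ω) (M.Hproc ⟨tp, h⟩ ω)
    else M.Y ω)

/-- The remainder `Rem_t(s̄_t, a_t, h_t; η')` of Theorem 2, as a function of the conditioning
event `S` (`S = {A_t = a_t, H_t = h_t}`, or `S = univ` for `t = 0`). -/
noncomputable def rem (M : Model 𝓐 𝓛 Ω) (d : Policy 𝓐 𝓛)
    (g' : ∀ t : Fin τ, 𝓐 t → Hist 𝓐 𝓛 t → ℝ)
    (m' mtrue : ∀ t : Fin τ, SbarN 𝓐 (t.val + 1) → 𝓐 t → Hist 𝓐 𝓛 t → ℝ)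
    (tp : ℕ) (sb : SbarN 𝓐 tp) (S : Set Ω) : ℝ :=
  ∑ k : Fin τ,
    if tp ≤ k.val then
      ∑ e : Ext 𝓐 tp k,
        condExpOn M.μ S (fun ω =>
          Dind M d tp k (mergeExt sb e) ω *
          (∏ r : Fin τ,
            if hr : tp ≤ r.val ∧ r.val < k.val then
              g' r (mergeExt sb e ⟨r, Nat.lt_succ_of_lt hr.2⟩) (M.Hproc r ω) /
                g' r (M.A r ω) (M.Hproc r ω)
            else 1) *
          (M.g k (mergeExt sb e ⟨k, Nat.lt_succ_self _⟩) (M.Hproc k ω) /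
              M.g k (M.A k ω) (M.Hproc k ω) -
            g' k (mergeExt sb e ⟨k, Nat.lt_succ_self _⟩) (M.Hproc k ω) /
              g' k (M.A k ω) (M.Hproc k ω)) *
          (m' k (mergeExt sb e) (M.A k ω) (M.Hproc k ω) -
            mtrue k (mergeExt sb e) (M.A k ω) (M.Hproc k ω)))
    else 0

/-! ### new aux -/


section Comb

variable {tp : ℕ}

def extCons (htp : tp < τ) {k : Fin τ} (s : 𝓐 ⟨tp, htp⟩) (e' : Ext 𝓐 (tp + 1) k) :
    Ext 𝓐 tp k :=
  fun u =>
    if h : u.1.val = tp then cast (congrArg 𝓐 (Fin.ext h : u.1 = ⟨tp, htp⟩)).symm s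
    else e' ⟨u.1, ⟨Nat.lt_of_le_of_ne u.2.1 (fun hh => h hh.symm), u.2.2⟩⟩

lemma extCons_at (htp : tp < τ) {k : Fin τ} (hk : tp ≤ k.val) (s : 𝓐 ⟨tp, htp⟩)
    (e' : Ext 𝓐 (tp + 1) k) :
    extCons htp s e' ⟨⟨tp, htp⟩, ⟨le_rfl, hk⟩⟩ = s := by
  simp only [extCons]
  rw [dif_pos trivial]
  exact eq_of_heq (cast_heq _ _)

lemma extCons_bijective (htp : tp < τ) {k : Fin τ} (hk : tp ≤ k.val) :
    Function.Bijective (fun p : 𝓐 ⟨tp, htp⟩ × Ext 𝓐 (tp + 1) k => extCons htp p.1 p.2) := by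
  constructor
  · rintro ⟨s1, e1⟩ ⟨s2, e2⟩ hE
    simp only at hE
    have h1 : s1 = s2 := by
      have := congrFun hE ⟨⟨tp, htp⟩, ⟨le_rfl, hk⟩⟩
      rwa [extCons_at htp hk, extCons_at htp hk] at this
    have h2 : e1 = e2 := by
      funext u
      have hu1 : tp + 1 ≤ u.1.val := u.2.1
      have := congrFun hE ⟨u.1, ⟨Nat.le_of_succ_le hu1, u.2.2⟩⟩
      simp only [extCons] at this
      rw [dif_neg (by omega), dif_neg (by omega)] at this
      exact this
    rw [h1, h2]
  · intro e
    refine ⟨⟨e ⟨⟨tp, htp⟩, ⟨le_rfl, hk⟩⟩, fun u => e ⟨u.1, ⟨Nat.le_of_succ_le u.2.1, u.2.2⟩⟩⟩, ?_⟩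
    funext u
    by_cases h : u.1.val = tp
    · have hu : u = ⟨⟨tp, htp⟩, ⟨le_rfl, hk⟩⟩ := Subtype.ext (Fin.ext h)
      subst hu
      simp only [extCons]
      rw [dif_pos trivial]
      exact eq_of_heq (cast_heq _ _)
    · simp only [extCons]
      rw [dif_neg h]

lemma sum_extCons (htp : tp < τ) {k : Fin τ} (hk : tp ≤ k.val) (f : Ext 𝓐 tp k → ℝ) :
    ∑ e : Ext 𝓐 tp k, f e =
      ∑ s : 𝓐 ⟨tp, htp⟩, ∑ e' : Ext 𝓐 (tp + 1) k, f (extCons htp s e') := by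
  rw [← Fintype.sum_bijective _ (extCons_bijective htp hk)
    (fun p => f (extCons htp p.1 p.2)) f (fun p => rfl)]
  exact Fintype.sum_prod_type _

lemma mergeExt_extCons (htp : tp < τ) {k : Fin τ} (sb : SbarN 𝓐 tp) (s : 𝓐 ⟨tp, htp⟩)
    (e' : Ext 𝓐 (tp + 1) k) :
    mergeExt sb (extCons htp s e') = mergeExt (snoc (t := ⟨tp, htp⟩) sb s) e' := by
  funext u
  by_cases h1 : u.1.val < tp
  · simp only [mergeExt]
    rw [dif_pos h1, dif_pos (by omega : u.1.val < tp + 1)]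
    simp only [snoc]
    rw [dif_neg (fun hh : u.1 = ⟨tp, htp⟩ => by rw [hh] at h1; exact lt_irrefl tp h1)]
  · by_cases h2 : u.1.val = tp
    · simp only [mergeExt]
      rw [dif_neg h1, dif_pos (by omega : u.1.val < tp + 1)]
      simp only [extCons, snoc]
      rw [dif_pos h2, dif_pos (Fin.ext h2 : u.1 = ⟨tp, htp⟩)]
    · simp only [mergeExt]
      rw [dif_neg h1, dif_neg (by omega : ¬ u.1.val < tp + 1)]
      simp only [extCons]
      rw [dif_neg h2]

lemma restrict_mergeExt {k : Fin τ} (h : tp + 1 ≤ k.val + 1) (sb' : SbarN 𝓐 (tp + 1))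
    (e' : Ext 𝓐 (tp + 1) k) :
    restrictSb h (mergeExt sb' e') = sb' := by
  funext u
  simp only [restrictSb, mergeExt]
  rw [dif_pos u.2]

lemma mergeExt_lt {k : Fin τ} (sb' : SbarN 𝓐 (tp + 1)) (e' : Ext 𝓐 (tp + 1) k)
    {u : Fin τ} (hu : u.val < k.val + 1) (h : u.val < tp + 1) :
    mergeExt sb' e' ⟨u, hu⟩ = sb' ⟨u, h⟩ := by
  simp only [mergeExt]
  rw [dif_pos h]

lemma snoc_last {t : Fin τ} (sb : SbarN 𝓐 t.val) (a : 𝓐 t) (h : (t : Fin τ).val < t.val + 1) :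
    snoc sb a ⟨t, h⟩ = a := by
  simp only [snoc]
  rw [dif_pos trivial]
  exact eq_of_heq (cast_heq _ _)

lemma mergeExt_self (htp : tp < τ) (sb'' : SbarN 𝓐 (tp + 1)) (e' : Ext 𝓐 (tp + 1) ⟨tp, htp⟩) :
    mergeExt sb'' e' = sb'' := by
  funext u
  simp only [mergeExt]
  rw [dif_pos u.2]

lemma restrictSb_refl {n : ℕ} (h : n ≤ n) (sb : SbarN 𝓐 n) : restrictSb h sb = sb := by
  funext u
  rfl

lemma prod_split (t : Fin τ) (f g : Fin τ → ℝ) (hfg : ∀ u, u ≠ t → f u = g u) (hg : g t = 1) :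
    ∏ u, f u = f t * ∏ u, g u := by
  rw [← Finset.mul_prod_erase Finset.univ f (Finset.mem_univ t),
    ← Finset.mul_prod_erase Finset.univ g (Finset.mem_univ t), hg, one_mul]
  exact congrArg _ (Finset.prod_congr rfl fun u hu => hfg u (Finset.ne_of_mem_erase hu))

lemma sum_split (t : Fin τ) (f g : Fin τ → ℝ) (hfg : ∀ u, u ≠ t → f u = g u) (hg : g t = 0) :
    ∑ u, f u = f t + ∑ u, g u := by
  rw [← Finset.add_sum_erase Finset.univ f (Finset.mem_univ t),
    ← Finset.add_sum_erase Finset.univ g (Finset.mem_univ t), hg, zero_add]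
  exact congrArg _ (Finset.sum_congr rfl fun u hu => hfg u (Finset.ne_of_mem_erase hu))

lemma extEmpty (htp : tp < τ) : IsEmpty {s : Fin τ // tp + 1 ≤ s.val ∧ s.val ≤ (⟨tp, htp⟩ : Fin τ).val} :=
  ⟨fun s => Nat.not_succ_le_self tp (le_trans s.2.1 s.2.2)⟩

end Comb


section SplitLemmas

variable {tp : ℕ} (M : Model 𝓐 𝓛 Ω) (d : Policy 𝓐 𝓛)
  (g' : ∀ t : Fin τ, 𝓐 t → Hist 𝓐 𝓛 t → ℝ)
  (m' : ∀ t : Fin τ, SbarN 𝓐 (t.val + 1) → 𝓐 t → Hist 𝓐 𝓛 t → ℝ)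

lemma Dind_split (htp : tp < τ) {k : Fin τ} (hk : tp ≤ k.val) (SB : SbarN 𝓐 (k.val + 1)) (ω : Ω) :
    Dind M d tp k SB ω =
      (if M.A ⟨tp, htp⟩ ω = d ⟨tp, htp⟩ (restrictSb (Nat.succ_le_succ hk) SB) (M.Hproc ⟨tp, htp⟩ ω)
        then (1 : ℝ) else 0) * Dind M d (tp + 1) k SB ω := by
  unfold Dind
  refine (prod_split ⟨tp, htp⟩
    (fun u => if hu : tp ≤ u.val ∧ u.val ≤ k.val then
      (if M.A u ω = d u (restrictSb (Nat.succ_le_succ hu.2) SB) (M.Hproc u ω) then (1:ℝ) else 0)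
      else 1)
    (fun u => if hu : tp + 1 ≤ u.val ∧ u.val ≤ k.val then
      (if M.A u ω = d u (restrictSb (Nat.succ_le_succ hu.2) SB) (M.Hproc u ω) then (1:ℝ) else 0)
      else 1) ?_ ?_).trans ?_
  · intro u hu
    have hval : u.val ≠ tp := fun hh => hu (Fin.ext hh)
    by_cases h2 : tp + 1 ≤ u.val ∧ u.val ≤ k.val
    · rw [dif_pos (⟨Nat.le_of_succ_le h2.1, h2.2⟩ : tp ≤ u.val ∧ u.val ≤ k.val), dif_pos h2]
    · by_cases h1 : tp ≤ u.val ∧ u.val ≤ k.val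
      · exact absurd ⟨Nat.lt_of_le_of_ne h1.1 (fun hh => hval hh.symm), h1.2⟩ h2
      · rw [dif_neg h1, dif_neg h2]
  · exact dif_neg (fun hc => Nat.not_succ_le_self tp hc.1)
  · dsimp only
    rw [dif_pos (⟨le_rfl, hk⟩ : tp ≤ (⟨tp, htp⟩ : Fin τ).val ∧ (⟨tp, htp⟩ : Fin τ).val ≤ k.val)]

lemma weight_split (htp : tp < τ) {k : Fin τ} (hk : tp ≤ k.val) (SB : SbarN 𝓐 (k.val + 1)) (ω : Ω) :
    weight M g' tp k SB ω =
      (g' ⟨tp, htp⟩ (SB ⟨⟨tp, htp⟩, Nat.lt_succ_of_le hk⟩) (M.Hproc ⟨tp, htp⟩ ω) /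
        g' ⟨tp, htp⟩ (M.A ⟨tp, htp⟩ ω) (M.Hproc ⟨tp, htp⟩ ω)) * weight M g' (tp + 1) k SB ω := by
  unfold weight
  refine (prod_split ⟨tp, htp⟩
    (fun u => if hu : tp ≤ u.val ∧ u.val ≤ k.val then
      g' u (SB ⟨u, Nat.lt_succ_of_le hu.2⟩) (M.Hproc u ω) / g' u (M.A u ω) (M.Hproc u ω)
      else 1)
    (fun u => if hu : tp + 1 ≤ u.val ∧ u.val ≤ k.val then
      g' u (SB ⟨u, Nat.lt_succ_of_le hu.2⟩) (M.Hproc u ω) / g' u (M.A u ω) (M.Hproc u ω)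
      else 1) ?_ ?_).trans ?_
  · intro u hu
    have hval : u.val ≠ tp := fun hh => hu (Fin.ext hh)
    by_cases h2 : tp + 1 ≤ u.val ∧ u.val ≤ k.val
    · rw [dif_pos (⟨Nat.le_of_succ_le h2.1, h2.2⟩ : tp ≤ u.val ∧ u.val ≤ k.val), dif_pos h2]
    · by_cases h1 : tp ≤ u.val ∧ u.val ≤ k.val
      · exact absurd ⟨Nat.lt_of_le_of_ne h1.1 (fun hh => hval hh.symm), h1.2⟩ h2
      · rw [dif_neg h1, dif_neg h2]
  · exact dif_neg (fun hc => Nat.not_succ_le_self tp hc.1)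
  · dsimp only
    rw [dif_pos (⟨le_rfl, hk⟩ : tp ≤ (⟨tp, htp⟩ : Fin τ).val ∧ (⟨tp, htp⟩ : Fin τ).val ≤ k.val)]

lemma Dind_one (htp : tp < τ) (SB : SbarN 𝓐 (tp + 1)) (ω : Ω) :
    Dind M d (tp + 1) ⟨tp, htp⟩ SB ω = 1 := by
  unfold Dind
  exact Finset.prod_eq_one fun u _ =>
    dif_neg (fun hc => Nat.not_succ_le_self tp (le_trans hc.1 hc.2))

lemma weight_one (htp : tp < τ) (SB : SbarN 𝓐 (tp + 1)) (ω : Ω) :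
    weight M g' (tp + 1) ⟨tp, htp⟩ SB ω = 1 := by
  unfold weight
  exact Finset.prod_eq_one fun u _ =>
    dif_neg (fun hc => Nat.not_succ_le_self tp (le_trans hc.1 hc.2))

lemma Dind_last (htp : tp < τ) (SB : SbarN 𝓐 (tp + 1)) (ω : Ω) :
    Dind M d tp ⟨tp, htp⟩ SB ω =
      (if M.A ⟨tp, htp⟩ ω = d ⟨tp, htp⟩ SB (M.Hproc ⟨tp, htp⟩ ω) then (1 : ℝ) else 0) := by
  rw [Dind_split M d htp (k := ⟨tp, htp⟩) le_rfl SB ω, Dind_one M d htp SB ω, mul_one]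
  rfl

lemma weight_last (htp : tp < τ) (SB : SbarN 𝓐 (tp + 1)) (ω : Ω) :
    weight M g' tp ⟨tp, htp⟩ SB ω =
      g' ⟨tp, htp⟩ (SB ⟨⟨tp, htp⟩, Nat.lt_succ_self tp⟩) (M.Hproc ⟨tp, htp⟩ ω) /
        g' ⟨tp, htp⟩ (M.A ⟨tp, htp⟩ ω) (M.Hproc ⟨tp, htp⟩ ω) := by
  rw [weight_split M g' htp (k := ⟨tp, htp⟩) le_rfl SB ω, weight_one M g' htp SB ω, mul_one]

end SplitLemmas

section PhiSucc

variable (M : Model 𝓐 𝓛 Ω) (d : Policy 𝓐 𝓛)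
  (g' : ∀ t : Fin τ, 𝓐 t → Hist 𝓐 𝓛 t → ℝ)
  (m' : ∀ t : Fin τ, SbarN 𝓐 (t.val + 1) → 𝓐 t → Hist 𝓐 𝓛 t → ℝ)

/-- The summand over `k` in the definition of `phi`. -/
noncomputable def Tterm (tp : ℕ) (sb : SbarN 𝓐 tp) (ω : Ω) (k : Fin τ) : ℝ :=
  ∑ e : Ext 𝓐 tp k,
    Dind M d tp k (mergeExt sb e) ω * weight M g' tp k (mergeExt sb e) ω *
      (M.qNext (qOf d m') k (mergeExt sb e) ω -
        m' k (mergeExt sb e) (M.A k ω) (M.Hproc k ω))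

lemma phi_eq_T (tp : ℕ) (sb : SbarN 𝓐 tp) (ω : Ω) :
    phi M d g' m' tp sb ω =
      (∑ k : Fin τ, if tp ≤ k.val then Tterm M d g' m' tp sb ω k else 0) +
      (if h : tp < τ then qOf d m' ⟨tp, h⟩ sb (M.A ⟨tp, h⟩ ω) (M.Hproc ⟨tp, h⟩ ω)
        else M.Y ω) := rfl

lemma phi_succ {tp : ℕ} (htp : tp < τ) (sb : SbarN 𝓐 tp) (ω : Ω) :
    phi M d g' m' tp sb ω =
      (∑ s : 𝓐 ⟨tp, htp⟩,
        (if M.A ⟨tp, htp⟩ ω = d ⟨tp, htp⟩ (snoc (t := ⟨tp, htp⟩) sb s) (M.Hproc ⟨tp, htp⟩ ω)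
            then (1 : ℝ) else 0) *
          (g' ⟨tp, htp⟩ s (M.Hproc ⟨tp, htp⟩ ω) /
            g' ⟨tp, htp⟩ (M.A ⟨tp, htp⟩ ω) (M.Hproc ⟨tp, htp⟩ ω)) *
          (phi M d g' m' (tp + 1) (snoc (t := ⟨tp, htp⟩) sb s) ω -
            m' ⟨tp, htp⟩ (snoc (t := ⟨tp, htp⟩) sb s) (M.A ⟨tp, htp⟩ ω)
              (M.Hproc ⟨tp, htp⟩ ω))) +
      qOf d m' ⟨tp, htp⟩ sb (M.A ⟨tp, htp⟩ ω) (M.Hproc ⟨tp, htp⟩ ω) := by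
  have hphi : ∀ sb' : SbarN 𝓐 (tp + 1), phi M d g' m' (tp + 1) sb' ω =
      (∑ k : Fin τ, if tp + 1 ≤ k.val then Tterm M d g' m' (tp + 1) sb' ω k else 0) +
      M.qNext (qOf d m') ⟨tp, htp⟩ sb' ω := fun sb' => rfl
  have hfg : ∀ u : Fin τ, u ≠ ⟨tp, htp⟩ →
      (if tp ≤ u.val then Tterm M d g' m' tp sb ω u else 0) =
      (if tp + 1 ≤ u.val then Tterm M d g' m' tp sb ω u else 0) := by
    intro u hu
    have hval : u.val ≠ tp := fun hh => hu (Fin.ext hh)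
    by_cases h2 : tp + 1 ≤ u.val
    · rw [if_pos (Nat.le_of_succ_le h2), if_pos h2]
    · rw [if_neg (by omega), if_neg h2]
  have hg0 : (if tp + 1 ≤ (⟨tp, htp⟩ : Fin τ).val then Tterm M d g' m' tp sb ω ⟨tp, htp⟩ else 0)
      = 0 := if_neg (fun hc => Nat.not_succ_le_self tp hc)
  have hTt : (if tp ≤ (⟨tp, htp⟩ : Fin τ).val then Tterm M d g' m' tp sb ω ⟨tp, htp⟩ else 0)
      = ∑ s : 𝓐 ⟨tp, htp⟩,
        (if M.A ⟨tp, htp⟩ ω = d ⟨tp, htp⟩ (snoc (t := ⟨tp, htp⟩) sb s) (M.Hproc ⟨tp, htp⟩ ω)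
            then (1 : ℝ) else 0) *
          (g' ⟨tp, htp⟩ s (M.Hproc ⟨tp, htp⟩ ω) /
            g' ⟨tp, htp⟩ (M.A ⟨tp, htp⟩ ω) (M.Hproc ⟨tp, htp⟩ ω)) *
          (M.qNext (qOf d m') ⟨tp, htp⟩ (snoc (t := ⟨tp, htp⟩) sb s) ω -
            m' ⟨tp, htp⟩ (snoc (t := ⟨tp, htp⟩) sb s) (M.A ⟨tp, htp⟩ ω)
              (M.Hproc ⟨tp, htp⟩ ω)) := by
    rw [if_pos (le_rfl : tp ≤ tp)]
    unfold Tterm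
    rw [sum_extCons htp (k := ⟨tp, htp⟩) le_rfl]
    refine Finset.sum_congr rfl fun s _ => ?_
    haveI : IsEmpty {u : Fin τ // tp + 1 ≤ u.val ∧ u.val ≤ (⟨tp, htp⟩ : Fin τ).val} :=
      extEmpty htp
    rw [Fintype.sum_unique]
    rw [mergeExt_extCons htp sb s, mergeExt_self htp]
    rw [Dind_last M d htp, weight_last M g' htp, snoc_last]
  have hTk : ∀ k : Fin τ, (if tp + 1 ≤ k.val then Tterm M d g' m' tp sb ω k else 0)
      = ∑ s : 𝓐 ⟨tp, htp⟩,
        ((if M.A ⟨tp, htp⟩ ω = d ⟨tp, htp⟩ (snoc (t := ⟨tp, htp⟩) sb s) (M.Hproc ⟨tp, htp⟩ ω)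
            then (1 : ℝ) else 0) *
          (g' ⟨tp, htp⟩ s (M.Hproc ⟨tp, htp⟩ ω) /
            g' ⟨tp, htp⟩ (M.A ⟨tp, htp⟩ ω) (M.Hproc ⟨tp, htp⟩ ω))) *
          (if tp + 1 ≤ k.val then Tterm M d g' m' (tp + 1) (snoc (t := ⟨tp, htp⟩) sb s) ω k
            else 0) := by
    intro k
    by_cases hk : tp + 1 ≤ k.val
    · simp only [if_pos hk]
      have hk' : tp ≤ k.val := Nat.le_of_succ_le hk
      calc Tterm M d g' m' tp sb ω k
          = ∑ s : 𝓐 ⟨tp, htp⟩, ∑ e' : Ext 𝓐 (tp + 1) k,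
            ((if M.A ⟨tp, htp⟩ ω = d ⟨tp, htp⟩ (snoc (t := ⟨tp, htp⟩) sb s)
                (M.Hproc ⟨tp, htp⟩ ω) then (1 : ℝ) else 0) *
              (g' ⟨tp, htp⟩ s (M.Hproc ⟨tp, htp⟩ ω) /
                g' ⟨tp, htp⟩ (M.A ⟨tp, htp⟩ ω) (M.Hproc ⟨tp, htp⟩ ω))) *
              (Dind M d (tp + 1) k (mergeExt (snoc (t := ⟨tp, htp⟩) sb s) e') ω *
                weight M g' (tp + 1) k (mergeExt (snoc (t := ⟨tp, htp⟩) sb s) e') ω *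
                (M.qNext (qOf d m') k (mergeExt (snoc (t := ⟨tp, htp⟩) sb s) e') ω -
                  m' k (mergeExt (snoc (t := ⟨tp, htp⟩) sb s) e') (M.A k ω) (M.Hproc k ω))) := by
            unfold Tterm
            rw [sum_extCons htp hk']
            refine Finset.sum_congr rfl fun s _ => Finset.sum_congr rfl fun e' _ => ?_
            rw [mergeExt_extCons htp sb s]
            rw [Dind_split M d htp hk' (mergeExt (snoc (t := ⟨tp, htp⟩) sb s) e') ω,
              weight_split M g' htp hk' (mergeExt (snoc (t := ⟨tp, htp⟩) sb s) e') ω,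
              restrict_mergeExt (Nat.succ_le_succ hk') (snoc (t := ⟨tp, htp⟩) sb s) e',
              mergeExt_lt (u := ⟨tp, htp⟩) (snoc (t := ⟨tp, htp⟩) sb s) e'
                (Nat.lt_succ_of_le hk') (Nat.lt_succ_self tp),
              snoc_last]
            ring
        _ = ∑ s : 𝓐 ⟨tp, htp⟩,
            ((if M.A ⟨tp, htp⟩ ω = d ⟨tp, htp⟩ (snoc (t := ⟨tp, htp⟩) sb s)
                (M.Hproc ⟨tp, htp⟩ ω) then (1 : ℝ) else 0) *
              (g' ⟨tp, htp⟩ s (M.Hproc ⟨tp, htp⟩ ω) /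
                g' ⟨tp, htp⟩ (M.A ⟨tp, htp⟩ ω) (M.Hproc ⟨tp, htp⟩ ω))) *
              Tterm M d g' m' (tp + 1) (snoc (t := ⟨tp, htp⟩) sb s) ω k :=
          Finset.sum_congr rfl fun s _ => (Finset.mul_sum _ _ _).symm
    · simp only [if_neg hk, mul_zero, Finset.sum_const_zero]
  rw [phi_eq_T, dif_pos htp]
  congr 1
  rw [sum_split ⟨tp, htp⟩ _ _ hfg hg0, hTt]
  simp only [hphi, hTk]
  rw [Finset.sum_comm, ← Finset.sum_add_distrib]
  refine Finset.sum_congr rfl fun s _ => ?_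
  rw [← Finset.mul_sum]
  ring

end PhiSucc

section HistFun

variable (M : Model 𝓐 𝓛 Ω)

/-- functions of the full treatment/covariate path -/
def histFun (X : Ω → ℝ) : Prop :=
  ∃ F : (∀ k, 𝓐 k) → (∀ k, 𝓛 k) → ℝ, ∀ ω, X ω = F (fun k => M.A k ω) (fun k => M.L k ω)

/-- affine-in-`Y` functions with path-dependent coefficients -/
def histAff (X : Ω → ℝ) : Prop :=
  ∃ F V : (∀ k, 𝓐 k) → (∀ k, 𝓛 k) → ℝ,
    ∀ ω, X ω = F (fun k => M.A k ω) (fun k => M.L k ω) +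
      V (fun k => M.A k ω) (fun k => M.L k ω) * M.Y ω

lemma histFun_pair (k : Fin τ) (F : 𝓐 k → Hist 𝓐 𝓛 k → ℝ) :
    histFun M (fun ω => F (M.A k ω) (M.Hproc k ω)) :=
  ⟨fun va vl => F (va k) (fun s => vl s.1, fun s => va s.1), fun ω => rfl⟩

lemma histFun_const (c : ℝ) : histFun M (fun _ => c) := ⟨fun _ _ => c, fun _ => rfl⟩

lemma histFun.mul {X Y : Ω → ℝ} (hX : histFun M X) (hY : histFun M Y) :
    histFun M (fun ω => X ω * Y ω) := by
  obtain ⟨F, hF⟩ := hX; obtain ⟨G, hG⟩ := hY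
  exact ⟨fun va vl => F va vl * G va vl, fun ω => by show X ω * Y ω = _; rw [hF, hG]⟩

lemma histFun_prod {ι : Type*} (s : Finset ι) (f : ι → Ω → ℝ) (h : ∀ i ∈ s, histFun M (f i)) :
    histFun M (fun ω => ∏ i ∈ s, f i ω) := by
  classical
  induction s using Finset.induction with
  | empty => simp only [Finset.prod_empty]; exact histFun_const M 1
  | insert _ _ hnotmem ih =>
      simp only [Finset.prod_insert hnotmem]
      exact (h _ (Finset.mem_insert_self _ _)).mul M
        (ih fun i hi => h i (Finset.mem_insert_of_mem hi))

lemma histFun.toAff {X : Ω → ℝ} (hX : histFun M X) : histAff M X := by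
  obtain ⟨F, hF⟩ := hX
  exact ⟨F, fun _ _ => 0, fun ω => by show X ω = _; rw [hF]; ring⟩

lemma histAff_Y : histAff M (fun ω => M.Y ω) :=
  ⟨fun _ _ => 0, fun _ _ => 1, fun ω => by show M.Y ω = _; ring⟩

lemma histAff.add {X Y : Ω → ℝ} (hX : histAff M X) (hY : histAff M Y) :
    histAff M (fun ω => X ω + Y ω) := by
  obtain ⟨F, V, hF⟩ := hX; obtain ⟨G, W, hG⟩ := hY
  exact ⟨fun va vl => F va vl + G va vl, fun va vl => V va vl + W va vl,
    fun ω => by show X ω + Y ω = _; rw [hF, hG]; ring⟩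

lemma histAff.sub {X Y : Ω → ℝ} (hX : histAff M X) (hY : histAff M Y) :
    histAff M (fun ω => X ω - Y ω) := by
  obtain ⟨F, V, hF⟩ := hX; obtain ⟨G, W, hG⟩ := hY
  exact ⟨fun va vl => F va vl - G va vl, fun va vl => V va vl - W va vl,
    fun ω => by show X ω - Y ω = _; rw [hF, hG]; ring⟩

lemma histFun.mulAff {X Y : Ω → ℝ} (hX : histFun M X) (hY : histAff M Y) :
    histAff M (fun ω => X ω * Y ω) := by
  obtain ⟨F, hF⟩ := hX; obtain ⟨G, W, hG⟩ := hY
  exact ⟨fun va vl => F va vl * G va vl, fun va vl => F va vl * W va vl,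
    fun ω => by show X ω * Y ω = _; rw [hF, hG]; ring⟩

lemma histAff_sum {ι : Type*} (s : Finset ι) (f : ι → Ω → ℝ) (h : ∀ i ∈ s, histAff M (f i)) :
    histAff M (fun ω => ∑ i ∈ s, f i ω) := by
  classical
  induction s using Finset.induction with
  | empty => simp only [Finset.sum_empty]; exact (histFun_const M 0).toAff M
  | insert _ _ hnotmem ih =>
      simp only [Finset.sum_insert hnotmem]
      exact (h _ (Finset.mem_insert_self _ _)).add M
        (ih fun i hi => h i (Finset.mem_insert_of_mem hi))

lemma histFun_measurable [∀ t, Fintype (𝓛 t)] (hmeas : M.Meas) {X : Ω → ℝ}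
    (hX : histFun M X) : Measurable X := by
  obtain ⟨F, hF⟩ := hX
  letI : MeasurableSpace ((∀ k, 𝓐 k) × (∀ k, 𝓛 k)) := ⊤
  have hT : Measurable (fun ω => ((fun k => M.A k ω, fun k => M.L k ω) :
      (∀ k, 𝓐 k) × (∀ k, 𝓛 k))) := by
    apply measurable_to_countable'
    intro p
    have hp : (fun ω => ((fun k => M.A k ω, fun k => M.L k ω) :
        (∀ k, 𝓐 k) × (∀ k, 𝓛 k))) ⁻¹' {p} =
        {ω | ∀ k, M.A k ω = p.1 k} ∩ {ω | ∀ k, M.L k ω = p.2 k} := by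
      ext ω
      simp [Prod.ext_iff, funext_iff]
    rw [hp]
    refine MeasurableSet.inter ?_ ?_
    · rw [Set.setOf_forall]; exact MeasurableSet.iInter fun k => hmeas.1 k (p.1 k)
    · rw [Set.setOf_forall]; exact MeasurableSet.iInter fun k => hmeas.2.1 k (p.2 k)
  have hX' : X = (fun q : (∀ k, 𝓐 k) × (∀ k, 𝓛 k) => F q.1 q.2) ∘
      (fun ω => (fun k => M.A k ω, fun k => M.L k ω)) := funext hF
  rw [hX']
  exact measurable_from_top.comp hT

lemma histAff_integrable [∀ t, Fintype (𝓛 t)] [∀ t, Nonempty (𝓐 t)] [∀ t, Nonempty (𝓛 t)]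
    [IsProbabilityMeasure M.μ] (hmeas : M.Meas) (hbdd : ∃ C, ∀ ω, |M.Y ω| ≤ C) {X : Ω → ℝ}
    (hX : histAff M X) : Integrable X M.μ := by
  obtain ⟨F, V, hFV⟩ := hX
  obtain ⟨C, hC⟩ := hbdd
  have hFm : Measurable (fun ω => F (fun k => M.A k ω) (fun k => M.L k ω)) :=
    histFun_measurable M hmeas ⟨F, fun _ => rfl⟩
  have hVm : Measurable (fun ω => V (fun k => M.A k ω) (fun k => M.L k ω)) :=
    histFun_measurable M hmeas ⟨V, fun _ => rfl⟩
  have hXm : Measurable X := by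
    have : X = fun ω => F (fun k => M.A k ω) (fun k => M.L k ω) +
        V (fun k => M.A k ω) (fun k => M.L k ω) * M.Y ω := funext hFV
    rw [this]
    exact hFm.add (hVm.mul hmeas.2.2)
  set BF := Finset.univ.sup' Finset.univ_nonempty
    (fun p : (∀ k, 𝓐 k) × (∀ k, 𝓛 k) => |F p.1 p.2|) with hBF
  set BV := Finset.univ.sup' Finset.univ_nonempty
    (fun p : (∀ k, 𝓐 k) × (∀ k, 𝓛 k) => |V p.1 p.2|) with hBV
  refine (integrable_const (BF + BV * C)).mono' hXm.aestronglyMeasurable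
    (Filter.Eventually.of_forall fun ω => ?_)
  rw [Real.norm_eq_abs, hFV ω]
  have h1 : |F (fun k => M.A k ω) (fun k => M.L k ω)| ≤ BF :=
    Finset.le_sup' (fun p : (∀ k, 𝓐 k) × (∀ k, 𝓛 k) => |F p.1 p.2|)
      (Finset.mem_univ ((fun k => M.A k ω), (fun k => M.L k ω)))
  have h2 : |V (fun k => M.A k ω) (fun k => M.L k ω)| ≤ BV :=
    Finset.le_sup' (fun p : (∀ k, 𝓐 k) × (∀ k, 𝓛 k) => |V p.1 p.2|)
      (Finset.mem_univ ((fun k => M.A k ω), (fun k => M.L k ω)))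
  calc |F (fun k => M.A k ω) (fun k => M.L k ω) +
        V (fun k => M.A k ω) (fun k => M.L k ω) * M.Y ω|
      ≤ |F (fun k => M.A k ω) (fun k => M.L k ω)| +
        |V (fun k => M.A k ω) (fun k => M.L k ω)| * |M.Y ω| := by
        refine (abs_add_le _ _).trans ?_
        rw [abs_mul]
    _ ≤ BF + BV * C :=
        add_le_add h1 (mul_le_mul h2 (hC ω) (abs_nonneg _) (le_trans (abs_nonneg _) h2))

variable (d : Policy 𝓐 𝓛) (g' : ∀ t : Fin τ, 𝓐 t → Hist 𝓐 𝓛 t → ℝ)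
  (m' : ∀ t : Fin τ, SbarN 𝓐 (t.val + 1) → 𝓐 t → Hist 𝓐 𝓛 t → ℝ)

lemma histFun_Dind (tp : ℕ) (k : Fin τ) (SB : SbarN 𝓐 (k.val + 1)) :
    histFun M (fun ω => Dind M d tp k SB ω) := by
  unfold Dind
  refine histFun_prod M Finset.univ _ fun u _ => ?_
  by_cases hu : tp ≤ u.val ∧ u.val ≤ k.val
  · simp only [dif_pos hu]
    exact histFun_pair M u
      (fun a h => if a = d u (restrictSb (Nat.succ_le_succ hu.2) SB) h then (1:ℝ) else 0)
  · simp only [dif_neg hu]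
    exact histFun_const M 1

lemma histFun_weight (tp : ℕ) (k : Fin τ) (SB : SbarN 𝓐 (k.val + 1)) :
    histFun M (fun ω => weight M g' tp k SB ω) := by
  unfold weight
  refine histFun_prod M Finset.univ _ fun u _ => ?_
  by_cases hu : tp ≤ u.val ∧ u.val ≤ k.val
  · simp only [dif_pos hu]
    exact histFun_pair M u
      (fun a h => g' u (SB ⟨u, Nat.lt_succ_of_le hu.2⟩) h / g' u a h)
  · simp only [dif_neg hu]
    exact histFun_const M 1

lemma histAff_qNext (q : ∀ t : Fin τ, SbarN 𝓐 t.val → 𝓐 t → Hist 𝓐 𝓛 t → ℝ)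
    (k : Fin τ) (SB : SbarN 𝓐 (k.val + 1)) :
    histAff M (fun ω => M.qNext q k SB ω) := by
  unfold Model.qNext
  by_cases h : k.val + 1 < τ
  · simp only [dif_pos h]
    exact (histFun_pair M ⟨k.val + 1, h⟩ (fun a hh => q ⟨k.val + 1, h⟩ SB a hh)).toAff M
  · simp only [dif_neg h]
    exact histAff_Y M

lemma histAff_phi (tp : ℕ) (sb : SbarN 𝓐 tp) :
    histAff M (fun ω => phi M d g' m' tp sb ω) := by
  unfold phi
  refine histAff.add M ?_ ?_
  · refine histAff_sum M Finset.univ _ fun k _ => ?_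
    by_cases hk : tp ≤ k.val
    · simp only [if_pos hk]
      refine histAff_sum M Finset.univ _ fun e _ => ?_
      refine histFun.mulAff M ?_ ?_
      · exact (histFun_Dind M d tp k (mergeExt sb e)).mul M
          (histFun_weight M g' tp k (mergeExt sb e))
      · exact (histAff_qNext M (qOf d m') k (mergeExt sb e)).sub M
          ((histFun_pair M k (m' k (mergeExt sb e))).toAff M)
    · simp only [if_neg hk]
      exact (histFun_const M 0).toAff M
  · by_cases h : tp < τ
    · simp only [dif_pos h]
      exact (histFun_pair M ⟨tp, h⟩ (fun a hh => qOf d m' ⟨tp, h⟩ sb a hh)).toAff M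
    · simp only [dif_neg h]
      exact histAff_Y M

end HistFun

section MeasureLemmas

variable (M : Model 𝓐 𝓛 Ω)

lemma measurableSet_histEvent (hmeas : M.Meas) (t : Fin τ) (h : Hist 𝓐 𝓛 t) :
    MeasurableSet (M.histEvent t h) := by
  have heq : M.histEvent t h =
      {ω | ∀ s : {s : Fin τ // s ≤ t}, M.L s.1 ω = h.1 s} ∩
      {ω | ∀ s : {s : Fin τ // s < t}, M.A s.1 ω = h.2 s} := by
    ext ω
    simp only [Model.histEvent, Model.Hproc, Set.mem_setOf_eq, Set.mem_inter_iff,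
      Prod.ext_iff, funext_iff]
  rw [heq]
  refine MeasurableSet.inter ?_ ?_
  · rw [Set.setOf_forall]; exact MeasurableSet.iInter fun s => hmeas.2.1 s.1 (h.1 s)
  · rw [Set.setOf_forall]; exact MeasurableSet.iInter fun s => hmeas.1 s.1 (h.2 s)

lemma measurableSet_condEvent (hmeas : M.Meas) (t : Fin τ) (a : 𝓐 t) (h : Hist 𝓐 𝓛 t) :
    MeasurableSet (M.condEvent t a h) :=
  (hmeas.1 t a).inter (measurableSet_histEvent M hmeas t h)

variable [∀ t, Fintype (𝓛 t)]

lemma sum_indicator (t : Fin τ) (X : Ω → ℝ) (ω : Ω) :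
    X ω = ∑ a : 𝓐 t, ∑ h : Hist 𝓐 𝓛 t, (M.condEvent t a h).indicator X ω := by
  classical
  rw [Finset.sum_eq_single (M.A t ω)]
  · rw [Finset.sum_eq_single (M.Hproc t ω)]
    · have hmem : ω ∈ M.condEvent t (M.A t ω) (M.Hproc t ω) := ⟨rfl, rfl⟩
      exact (Set.indicator_of_mem hmem X).symm
    · intro h _ hne
      exact Set.indicator_of_notMem (fun hmem => hne hmem.2.symm) X
    · intro hne; exact absurd (Finset.mem_univ _) hne
  · intro a _ hne
    exact Finset.sum_eq_zero fun h _ =>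
      Set.indicator_of_notMem (fun hmem => hne hmem.1.symm) X
  · intro hne; exact absurd (Finset.mem_univ _) hne

lemma setIntegral_partition (hmeas : M.Meas) (t : Fin τ) {S : Set Ω} (hS : MeasurableSet S)
    {X : Ω → ℝ} (hX : Integrable X M.μ) :
    ∫ ω in S, X ω ∂M.μ =
      ∑ a : 𝓐 t, ∑ h : Hist 𝓐 𝓛 t, ∫ ω in S ∩ M.condEvent t a h, X ω ∂M.μ := by
  have h1 : ∫ ω in S, X ω ∂M.μ =
      ∫ ω in S, (∑ a : 𝓐 t, ∑ h : Hist 𝓐 𝓛 t, (M.condEvent t a h).indicator X ω) ∂M.μ :=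
    setIntegral_congr_fun hS fun ω _ => sum_indicator M t X ω
  rw [h1, integral_finset_sum _ (fun a _ => (integrable_finset_sum _ fun h _ =>
    hX.indicator (measurableSet_condEvent M hmeas t a h)).restrict)]
  refine Finset.sum_congr rfl fun a _ => ?_
  rw [integral_finset_sum _ (fun h _ =>
    (hX.indicator (measurableSet_condEvent M hmeas t a h)).restrict)]
  exact Finset.sum_congr rfl fun h _ =>
    setIntegral_indicator (measurableSet_condEvent M hmeas t a h)

lemma setIntegral_pair_mul (t : Fin τ) {a : 𝓐 t} {h : Hist 𝓐 𝓛 t} {S : Set Ω}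
    (hS : MeasurableSet S) (hsub : S ⊆ M.condEvent t a h) (F : 𝓐 t → Hist 𝓐 𝓛 t → ℝ)
    (X : Ω → ℝ) :
    ∫ ω in S, F (M.A t ω) (M.Hproc t ω) * X ω ∂M.μ = F a h * ∫ ω in S, X ω ∂M.μ := by
  refine (setIntegral_congr_fun hS (fun ω hω => ?_)).trans (integral_const_mul _ _)
  show F (M.A t ω) (M.Hproc t ω) * X ω = F a h * X ω
  rw [(hsub hω).1, (hsub hω).2]

lemma setIntegral_pair (t : Fin τ) {a : 𝓐 t} {h : Hist 𝓐 𝓛 t} {S : Set Ω}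
    (hS : MeasurableSet S) (hsub : S ⊆ M.condEvent t a h) (F : 𝓐 t → Hist 𝓐 𝓛 t → ℝ) :
    ∫ ω in S, F (M.A t ω) (M.Hproc t ω) ∂M.μ = F a h * (M.μ S).toReal := by
  have h1 : ∫ ω in S, F (M.A t ω) (M.Hproc t ω) ∂M.μ = ∫ _ in S, F a h ∂M.μ :=
    setIntegral_congr_fun hS fun ω hω => by
      show F (M.A t ω) (M.Hproc t ω) = F a h
      rw [(hsub hω).1, (hsub hω).2]
  rw [h1, setIntegral_const, smul_eq_mul, mul_comm, measureReal_def]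

lemma measure_condEvent_pos_toReal [IsProbabilityMeasure M.μ] (hpos : M.Positivity)
    (t : Fin τ) (a : 𝓐 t) (h : Hist 𝓐 𝓛 t) : 0 < (M.μ (M.condEvent t a h)).toReal :=
  ENNReal.toReal_pos (ne_of_gt (hpos t a h)) (measure_ne_top _ _)

lemma qNext_setIntegral [IsProbabilityMeasure M.μ] (hpos : M.Positivity) (d : Policy 𝓐 𝓛)
    (m : ∀ t : Fin τ, SbarN 𝓐 (t.val + 1) → 𝓐 t → Hist 𝓐 𝓛 t → ℝ) (hm : IsSeqReg M d m)
    (t : Fin τ) (sb' : SbarN 𝓐 (t.val + 1)) (a : 𝓐 t) (h : Hist 𝓐 𝓛 t) :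
    ∫ ω in M.condEvent t a h, M.qNext (qOf d m) t sb' ω ∂M.μ =
      m t sb' a h * (M.μ (M.condEvent t a h)).toReal := by
  have h1 := hm t sb' a h
  have h2 : (M.μ (M.condEvent t a h)).toReal ≠ 0 :=
    ne_of_gt (measure_condEvent_pos_toReal M hpos t a h)
  unfold condExpOn at h1
  rw [h1]
  field_simp

end MeasureLemmas

section RemInt

variable (M : Model 𝓐 𝓛 Ω) (d : Policy 𝓐 𝓛)
  (g' : ∀ t : Fin τ, 𝓐 t → Hist 𝓐 𝓛 t → ℝ)
  (m' mtrue : ∀ t : Fin τ, SbarN 𝓐 (t.val + 1) → 𝓐 t → Hist 𝓐 𝓛 t → ℝ)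

/-- The integrand of the remainder at time `k`, for augmented history `SB`. -/
noncomputable def remIntegrand (tp : ℕ) (k : Fin τ) (SB : SbarN 𝓐 (k.val + 1)) (ω : Ω) : ℝ :=
  Dind M d tp k SB ω *
  (∏ r : Fin τ,
    if hr : tp ≤ r.val ∧ r.val < k.val then
      g' r (SB ⟨r, Nat.lt_succ_of_lt hr.2⟩) (M.Hproc r ω) /
        g' r (M.A r ω) (M.Hproc r ω)
    else 1) *
  (M.g k (SB ⟨k, Nat.lt_succ_self _⟩) (M.Hproc k ω) /
      M.g k (M.A k ω) (M.Hproc k ω) -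
    g' k (SB ⟨k, Nat.lt_succ_self _⟩) (M.Hproc k ω) /
      g' k (M.A k ω) (M.Hproc k ω)) *
  (m' k SB (M.A k ω) (M.Hproc k ω) -
    mtrue k SB (M.A k ω) (M.Hproc k ω))

/-- Unnormalized remainder: `rem` times the measure of the conditioning event. -/
noncomputable def remInt (tp : ℕ) (sb : SbarN 𝓐 tp) (S : Set Ω) : ℝ :=
  ∑ k : Fin τ,
    if tp ≤ k.val then
      ∑ e : Ext 𝓐 tp k, ∫ ω in S, remIntegrand M d g' m' mtrue tp k (mergeExt sb e) ω ∂M.μ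
    else 0

lemma rem_eq_remInt (tp : ℕ) (sb : SbarN 𝓐 tp) (S : Set Ω) :
    rem M d g' m' mtrue tp sb S = remInt M d g' m' mtrue tp sb S / (M.μ S).toReal := by
  unfold rem remInt
  rw [Finset.sum_div]
  refine Finset.sum_congr rfl fun k _ => ?_
  by_cases hk : tp ≤ k.val
  · rw [if_pos hk, if_pos hk, Finset.sum_div]
    exact Finset.sum_congr rfl fun e _ => rfl
  · rw [if_neg hk, if_neg hk, zero_div]

/-- The target function whose conditional expectation is `m`. -/
noncomputable def Qfun (m : ∀ t : Fin τ, SbarN 𝓐 (t.val + 1) → 𝓐 t → Hist 𝓐 𝓛 t → ℝ)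
    (tp : ℕ) (sb : SbarN 𝓐 tp) (ω : Ω) : ℝ :=
  if h : tp < τ then qOf d m ⟨tp, h⟩ sb (M.A ⟨tp, h⟩ ω) (M.Hproc ⟨tp, h⟩ ω) else M.Y ω

lemma histFun_remIntegrand (tp : ℕ) (k : Fin τ) (SB : SbarN 𝓐 (k.val + 1)) :
    histFun M (fun ω => remIntegrand M d g' m' mtrue tp k SB ω) := by
  unfold remIntegrand
  refine histFun.mul M (histFun.mul M (histFun.mul M ?_ ?_) ?_) ?_
  · exact histFun_Dind M d tp k SB
  · refine histFun_prod M Finset.univ _ fun r _ => ?_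
    by_cases hr : tp ≤ r.val ∧ r.val < k.val
    · simp only [dif_pos hr]
      exact histFun_pair M r (fun a h => g' r (SB ⟨r, Nat.lt_succ_of_lt hr.2⟩) h / g' r a h)
    · simp only [dif_neg hr]
      exact histFun_const M 1
  · exact histFun_pair M k (fun a h =>
      M.g k (SB ⟨k, Nat.lt_succ_self _⟩) h / M.g k a h -
        g' k (SB ⟨k, Nat.lt_succ_self _⟩) h / g' k a h)
  · exact histFun_pair M k (fun a h => m' k SB a h - mtrue k SB a h)

lemma histAff_Qfun (m : ∀ t : Fin τ, SbarN 𝓐 (t.val + 1) → 𝓐 t → Hist 𝓐 𝓛 t → ℝ)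
    (tp : ℕ) (sb : SbarN 𝓐 tp) : histAff M (fun ω => Qfun M d m tp sb ω) := by
  unfold Qfun
  by_cases h : tp < τ
  · simp only [dif_pos h]
    exact (histFun_pair M ⟨tp, h⟩ (fun a hh => qOf d m ⟨tp, h⟩ sb a hh)).toAff M
  · simp only [dif_neg h]
    exact histAff_Y M

end RemInt

section Compat

variable (M : Model 𝓐 𝓛 Ω)

/-- Restriction of a history to an earlier time. -/
def histRestrict {t1 t2 : Fin τ} (h12 : t1 ≤ t2) (h : Hist 𝓐 𝓛 t2) : Hist 𝓐 𝓛 t1 :=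
  (fun s => h.1 ⟨s.1, le_trans s.2 h12⟩, fun s => h.2 ⟨s.1, lt_of_lt_of_le s.2 h12⟩)

lemma condEvent_subset_restrict {tp : ℕ} (htp : tp < τ) (ht' : tp + 1 < τ)
    (a'' : 𝓐 ⟨tp + 1, ht'⟩) (h'' : Hist 𝓐 𝓛 ⟨tp + 1, ht'⟩) :
    M.condEvent ⟨tp + 1, ht'⟩ a'' h'' ⊆
      M.condEvent ⟨tp, htp⟩
        (h''.2 ⟨⟨tp, htp⟩, Fin.mk_lt_mk.mpr (Nat.lt_succ_self tp)⟩)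
        (histRestrict (Fin.mk_le_mk.mpr (Nat.le_succ tp)) h'') := by
  rintro ω ⟨_, hH⟩
  have hH' : M.Hproc ⟨tp + 1, ht'⟩ ω = h'' := hH
  constructor
  · show M.A ⟨tp, htp⟩ ω = _
    rw [← hH']
    rfl
  · show M.Hproc ⟨tp, htp⟩ ω = _
    rw [← hH']
    rfl

lemma compat_step {tp : ℕ} (htp : tp < τ) (a' : 𝓐 ⟨tp, htp⟩) (h' : Hist 𝓐 𝓛 ⟨tp, htp⟩)
    (ht' : tp + 1 < τ) (h'' : Hist 𝓐 𝓛 ⟨tp + 1, ht'⟩) :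
    (∀ a'', M.condEvent ⟨tp + 1, ht'⟩ a'' h'' ⊆ M.condEvent ⟨tp, htp⟩ a' h') ∨
    (∀ a'', M.condEvent ⟨tp, htp⟩ a' h' ∩ M.condEvent ⟨tp + 1, ht'⟩ a'' h'' = ∅) := by
  by_cases hc : h''.2 ⟨⟨tp, htp⟩, Fin.mk_lt_mk.mpr (Nat.lt_succ_self tp)⟩ = a' ∧
      histRestrict (Fin.mk_le_mk.mpr (Nat.le_succ tp)) h'' = h'
  · left
    intro a'' ω hω
    have h2 := condEvent_subset_restrict M htp ht' a'' h'' hω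
    rw [hc.1, hc.2] at h2
    exact h2
  · right
    intro a''
    rw [Set.eq_empty_iff_forall_notMem]
    rintro ω ⟨hω1, hω2⟩
    have h2 := condEvent_subset_restrict M htp ht' a'' h'' hω2
    exact hc ⟨h2.1.symm.trans hω1.1, h2.2.symm.trans hω1.2⟩

lemma g_ratio_mul [IsProbabilityMeasure M.μ] (hpos : M.Positivity) (t : Fin τ)
    (s a : 𝓐 t) (h : Hist 𝓐 𝓛 t) :
    M.g t s h / M.g t a h * (M.μ (M.condEvent t a h)).toReal =
      (M.μ (M.condEvent t s h)).toReal := by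
  unfold Model.g
  have hca : 0 < (M.μ (M.condEvent t a h)).toReal :=
    ENNReal.toReal_pos (ne_of_gt (hpos t a h)) (measure_ne_top _ _)
  have hch : 0 < (M.μ (M.histEvent t h)).toReal := by
    refine lt_of_lt_of_le hca ?_
    exact ENNReal.toReal_le_toReal (measure_ne_top _ _) (measure_ne_top _ _) |>.mpr
      (measure_mono Set.inter_subset_right)
  field_simp

end Compat

section HeadIdentity

variable [∀ t, Nonempty (𝓐 t)] [∀ t, Fintype (𝓛 t)] [∀ t, Nonempty (𝓛 t)]
variable (M : Model 𝓐 𝓛 Ω) [IsProbabilityMeasure M.μ] (d : Policy 𝓐 𝓛)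
  (m m' : ∀ t : Fin τ, SbarN 𝓐 (t.val + 1) → 𝓐 t → Hist 𝓐 𝓛 t → ℝ)
  (g' : ∀ t : Fin τ, 𝓐 t → Hist 𝓐 𝓛 t → ℝ)


lemma abstract_head {α β : Type*} [Fintype α] [Fintype β] [DecidableEq α]
    (ds : α → β → α) (gv g'v : α → α → β → ℝ) (mv m'v : α → α → β → ℝ)
    (q'v qv : α → β → ℝ) (c : α → β → ℝ)
    (hkey : ∀ s a h, gv s a h * c a h = c s h)
    (hq : ∀ a h, q'v a h - qv a h = m'v a (ds a h) h - mv a (ds a h) h) :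
    (∑ s : α, ∑ a : α, ∑ h : β,
        ((if a = ds s h then (1:ℝ) else 0) * g'v s a h) * (mv s a h - m'v s a h) * c a h) +
      (∑ a : α, ∑ h : β, q'v a h * c a h) =
    (∑ a : α, ∑ h : β, qv a h * c a h) +
      ∑ s : α, ∑ a : α, ∑ h : β,
        ((if a = ds s h then (1:ℝ) else 0) * (gv s a h - g'v s a h) * (m'v s a h - mv s a h)) *
          c a h := by
  have hR : ∀ s : α,
      (∑ a : α, ∑ h : β, ((if a = ds s h then (1:ℝ) else 0) * (gv s a h - g'v s a h) *
          (m'v s a h - mv s a h)) * c a h) -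
      (∑ a : α, ∑ h : β, ((if a = ds s h then (1:ℝ) else 0) * g'v s a h) *
          (mv s a h - m'v s a h) * c a h) =
      ∑ h : β, (m'v s (ds s h) h - mv s (ds s h) h) * c s h := by
    intro s
    calc (∑ a : α, ∑ h : β, ((if a = ds s h then (1:ℝ) else 0) * (gv s a h - g'v s a h) *
            (m'v s a h - mv s a h)) * c a h) -
        (∑ a : α, ∑ h : β, ((if a = ds s h then (1:ℝ) else 0) * g'v s a h) *
            (mv s a h - m'v s a h) * c a h)
        = ∑ a : α, ∑ h : β,
            (((if a = ds s h then (1:ℝ) else 0) * (gv s a h - g'v s a h) *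
              (m'v s a h - mv s a h)) * c a h -
            ((if a = ds s h then (1:ℝ) else 0) * g'v s a h) *
              (mv s a h - m'v s a h) * c a h) := by
          rw [← Finset.sum_sub_distrib]
          exact Finset.sum_congr rfl fun a _ => (Finset.sum_sub_distrib ..).symm
      _ = ∑ h : β, ∑ a : α,
            (((if a = ds s h then (1:ℝ) else 0) * (gv s a h - g'v s a h) *
              (m'v s a h - mv s a h)) * c a h -
            ((if a = ds s h then (1:ℝ) else 0) * g'v s a h) *
              (mv s a h - m'v s a h) * c a h) := Finset.sum_comm
      _ = ∑ h : β, (m'v s (ds s h) h - mv s (ds s h) h) * c s h := by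
          refine Finset.sum_congr rfl fun h _ => ?_
          rw [Finset.sum_eq_single (ds s h)]
          · rw [if_pos rfl]
            linear_combination (m'v s (ds s h) h - mv s (ds s h) h) * hkey s (ds s h) h
          · intro a _ hne
            rw [if_neg hne]
            ring
          · intro hh
            exact absurd (Finset.mem_univ _) hh
  have hD : (∑ s : α, ∑ a : α, ∑ h : β,
        ((if a = ds s h then (1:ℝ) else 0) * (gv s a h - g'v s a h) *
          (m'v s a h - mv s a h)) * c a h) -
      (∑ s : α, ∑ a : α, ∑ h : β,
        ((if a = ds s h then (1:ℝ) else 0) * g'v s a h) * (mv s a h - m'v s a h) * c a h) =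
      ∑ s : α, ∑ h : β, (m'v s (ds s h) h - mv s (ds s h) h) * c s h := by
    rw [← Finset.sum_sub_distrib]
    exact Finset.sum_congr rfl fun s _ => hR s
  have hB : (∑ a : α, ∑ h : β, q'v a h * c a h) - (∑ a : α, ∑ h : β, qv a h * c a h) =
      ∑ a : α, ∑ h : β, (m'v a (ds a h) h - mv a (ds a h) h) * c a h := by
    rw [← Finset.sum_sub_distrib]
    refine Finset.sum_congr rfl fun a _ => ?_
    rw [← Finset.sum_sub_distrib]
    refine Finset.sum_congr rfl fun h _ => ?_
    rw [← sub_mul, hq a h]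
  linarith [hD, hB]

lemma head_identity (hmeas : M.Meas) (hbdd : ∃ C, ∀ ω, |M.Y ω| ≤ C) (hpos : M.Positivity)
    {tp : ℕ} (htp : tp < τ) (sb : SbarN 𝓐 tp) {S : Set Ω} (hS : MeasurableSet S)
    (hcompat : ∀ h' : Hist 𝓐 𝓛 ⟨tp, htp⟩,
      (∀ a', M.condEvent ⟨tp, htp⟩ a' h' ⊆ S) ∨
      (∀ a', S ∩ M.condEvent ⟨tp, htp⟩ a' h' = ∅)) :
    (∑ s : 𝓐 ⟨tp, htp⟩, ∫ ω in S,
        ((if M.A ⟨tp, htp⟩ ω = d ⟨tp, htp⟩ (snoc (t := ⟨tp, htp⟩) sb s) (M.Hproc ⟨tp, htp⟩ ω)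
            then (1:ℝ) else 0) *
          (g' ⟨tp, htp⟩ s (M.Hproc ⟨tp, htp⟩ ω) /
            g' ⟨tp, htp⟩ (M.A ⟨tp, htp⟩ ω) (M.Hproc ⟨tp, htp⟩ ω))) *
        (m ⟨tp, htp⟩ (snoc (t := ⟨tp, htp⟩) sb s) (M.A ⟨tp, htp⟩ ω) (M.Hproc ⟨tp, htp⟩ ω) -
          m' ⟨tp, htp⟩ (snoc (t := ⟨tp, htp⟩) sb s) (M.A ⟨tp, htp⟩ ω) (M.Hproc ⟨tp, htp⟩ ω))
        ∂M.μ) +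
      ∫ ω in S, qOf d m' ⟨tp, htp⟩ sb (M.A ⟨tp, htp⟩ ω) (M.Hproc ⟨tp, htp⟩ ω) ∂M.μ =
    (∫ ω in S, qOf d m ⟨tp, htp⟩ sb (M.A ⟨tp, htp⟩ ω) (M.Hproc ⟨tp, htp⟩ ω) ∂M.μ) +
      ∑ s : 𝓐 ⟨tp, htp⟩, ∫ ω in S,
        (if M.A ⟨tp, htp⟩ ω = d ⟨tp, htp⟩ (snoc (t := ⟨tp, htp⟩) sb s) (M.Hproc ⟨tp, htp⟩ ω)
            then (1:ℝ) else 0) *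
        (M.g ⟨tp, htp⟩ s (M.Hproc ⟨tp, htp⟩ ω) /
            M.g ⟨tp, htp⟩ (M.A ⟨tp, htp⟩ ω) (M.Hproc ⟨tp, htp⟩ ω) -
          g' ⟨tp, htp⟩ s (M.Hproc ⟨tp, htp⟩ ω) /
            g' ⟨tp, htp⟩ (M.A ⟨tp, htp⟩ ω) (M.Hproc ⟨tp, htp⟩ ω)) *
        (m' ⟨tp, htp⟩ (snoc (t := ⟨tp, htp⟩) sb s) (M.A ⟨tp, htp⟩ ω) (M.Hproc ⟨tp, htp⟩ ω) -
          m ⟨tp, htp⟩ (snoc (t := ⟨tp, htp⟩) sb s) (M.A ⟨tp, htp⟩ ω) (M.Hproc ⟨tp, htp⟩ ω))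
        ∂M.μ := by
  have hpart : ∀ F : 𝓐 ⟨tp, htp⟩ → Hist 𝓐 𝓛 ⟨tp, htp⟩ → ℝ,
      ∫ ω in S, F (M.A ⟨tp, htp⟩ ω) (M.Hproc ⟨tp, htp⟩ ω) ∂M.μ =
      ∑ a' : 𝓐 ⟨tp, htp⟩, ∑ h' : Hist 𝓐 𝓛 ⟨tp, htp⟩,
        F a' h' * (M.μ (S ∩ M.condEvent ⟨tp, htp⟩ a' h')).toReal := by
    intro F
    rw [setIntegral_partition M hmeas ⟨tp, htp⟩ hS
      (histAff_integrable M hmeas hbdd ((histFun_pair M ⟨tp, htp⟩ F).toAff M))]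
    exact Finset.sum_congr rfl fun a' _ => Finset.sum_congr rfl fun h' _ =>
      setIntegral_pair M ⟨tp, htp⟩ (hS.inter (measurableSet_condEvent M hmeas _ _ _))
        Set.inter_subset_right F
  have e1 : ∀ s : 𝓐 ⟨tp, htp⟩, (∫ ω in S,
        ((if M.A ⟨tp, htp⟩ ω = d ⟨tp, htp⟩ (snoc (t := ⟨tp, htp⟩) sb s) (M.Hproc ⟨tp, htp⟩ ω)
            then (1:ℝ) else 0) *
          (g' ⟨tp, htp⟩ s (M.Hproc ⟨tp, htp⟩ ω) /
            g' ⟨tp, htp⟩ (M.A ⟨tp, htp⟩ ω) (M.Hproc ⟨tp, htp⟩ ω))) *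
        (m ⟨tp, htp⟩ (snoc (t := ⟨tp, htp⟩) sb s) (M.A ⟨tp, htp⟩ ω) (M.Hproc ⟨tp, htp⟩ ω) -
          m' ⟨tp, htp⟩ (snoc (t := ⟨tp, htp⟩) sb s) (M.A ⟨tp, htp⟩ ω) (M.Hproc ⟨tp, htp⟩ ω))
        ∂M.μ) =
      ∑ a' : 𝓐 ⟨tp, htp⟩, ∑ h' : Hist 𝓐 𝓛 ⟨tp, htp⟩,
        (((if a' = d ⟨tp, htp⟩ (snoc (t := ⟨tp, htp⟩) sb s) h' then (1:ℝ) else 0) *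
          (g' ⟨tp, htp⟩ s h' / g' ⟨tp, htp⟩ a' h')) *
        (m ⟨tp, htp⟩ (snoc (t := ⟨tp, htp⟩) sb s) a' h' -
          m' ⟨tp, htp⟩ (snoc (t := ⟨tp, htp⟩) sb s) a' h')) *
        (M.μ (S ∩ M.condEvent ⟨tp, htp⟩ a' h')).toReal :=
    fun s => hpart (fun a h =>
      ((if a = d ⟨tp, htp⟩ (snoc (t := ⟨tp, htp⟩) sb s) h then (1:ℝ) else 0) *
        (g' ⟨tp, htp⟩ s h / g' ⟨tp, htp⟩ a h)) *
      (m ⟨tp, htp⟩ (snoc (t := ⟨tp, htp⟩) sb s) a h -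
        m' ⟨tp, htp⟩ (snoc (t := ⟨tp, htp⟩) sb s) a h))
  have e4 : ∀ s : 𝓐 ⟨tp, htp⟩, (∫ ω in S,
        (if M.A ⟨tp, htp⟩ ω = d ⟨tp, htp⟩ (snoc (t := ⟨tp, htp⟩) sb s) (M.Hproc ⟨tp, htp⟩ ω)
            then (1:ℝ) else 0) *
        (M.g ⟨tp, htp⟩ s (M.Hproc ⟨tp, htp⟩ ω) /
            M.g ⟨tp, htp⟩ (M.A ⟨tp, htp⟩ ω) (M.Hproc ⟨tp, htp⟩ ω) -
          g' ⟨tp, htp⟩ s (M.Hproc ⟨tp, htp⟩ ω) /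
            g' ⟨tp, htp⟩ (M.A ⟨tp, htp⟩ ω) (M.Hproc ⟨tp, htp⟩ ω)) *
        (m' ⟨tp, htp⟩ (snoc (t := ⟨tp, htp⟩) sb s) (M.A ⟨tp, htp⟩ ω) (M.Hproc ⟨tp, htp⟩ ω) -
          m ⟨tp, htp⟩ (snoc (t := ⟨tp, htp⟩) sb s) (M.A ⟨tp, htp⟩ ω) (M.Hproc ⟨tp, htp⟩ ω))
        ∂M.μ) =
      ∑ a' : 𝓐 ⟨tp, htp⟩, ∑ h' : Hist 𝓐 𝓛 ⟨tp, htp⟩,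
        ((if a' = d ⟨tp, htp⟩ (snoc (t := ⟨tp, htp⟩) sb s) h' then (1:ℝ) else 0) *
        (M.g ⟨tp, htp⟩ s h' / M.g ⟨tp, htp⟩ a' h' -
          g' ⟨tp, htp⟩ s h' / g' ⟨tp, htp⟩ a' h') *
        (m' ⟨tp, htp⟩ (snoc (t := ⟨tp, htp⟩) sb s) a' h' -
          m ⟨tp, htp⟩ (snoc (t := ⟨tp, htp⟩) sb s) a' h')) *
        (M.μ (S ∩ M.condEvent ⟨tp, htp⟩ a' h')).toReal :=
    fun s => hpart (fun a h =>
      (if a = d ⟨tp, htp⟩ (snoc (t := ⟨tp, htp⟩) sb s) h then (1:ℝ) else 0) *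
      (M.g ⟨tp, htp⟩ s h / M.g ⟨tp, htp⟩ a h -
        g' ⟨tp, htp⟩ s h / g' ⟨tp, htp⟩ a h) *
      (m' ⟨tp, htp⟩ (snoc (t := ⟨tp, htp⟩) sb s) a h -
        m ⟨tp, htp⟩ (snoc (t := ⟨tp, htp⟩) sb s) a h))
  have e2 : (∫ ω in S, qOf d m' ⟨tp, htp⟩ sb (M.A ⟨tp, htp⟩ ω) (M.Hproc ⟨tp, htp⟩ ω) ∂M.μ) =
      ∑ a' : 𝓐 ⟨tp, htp⟩, ∑ h' : Hist 𝓐 𝓛 ⟨tp, htp⟩,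
        qOf d m' ⟨tp, htp⟩ sb a' h' * (M.μ (S ∩ M.condEvent ⟨tp, htp⟩ a' h')).toReal :=
    hpart (fun a h => qOf d m' ⟨tp, htp⟩ sb a h)
  have e3 : (∫ ω in S, qOf d m ⟨tp, htp⟩ sb (M.A ⟨tp, htp⟩ ω) (M.Hproc ⟨tp, htp⟩ ω) ∂M.μ) =
      ∑ a' : 𝓐 ⟨tp, htp⟩, ∑ h' : Hist 𝓐 𝓛 ⟨tp, htp⟩,
        qOf d m ⟨tp, htp⟩ sb a' h' * (M.μ (S ∩ M.condEvent ⟨tp, htp⟩ a' h')).toReal :=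
    hpart (fun a h => qOf d m ⟨tp, htp⟩ sb a h)
  rw [e2, e3]
  simp only [e1, e4]
  clear e1 e2 e3 e4 hpart
  -- key measure identity, valid in both compatibility cases
  have key2 : ∀ (s a'' : 𝓐 ⟨tp, htp⟩) (h' : Hist 𝓐 𝓛 ⟨tp, htp⟩),
      M.g ⟨tp, htp⟩ s h' / M.g ⟨tp, htp⟩ a'' h' *
        (M.μ (S ∩ M.condEvent ⟨tp, htp⟩ a'' h')).toReal =
      (M.μ (S ∩ M.condEvent ⟨tp, htp⟩ s h')).toReal := by
    intro s a'' h'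
    rcases hcompat h' with hcL | hcR
    · rw [Set.inter_eq_right.mpr (hcL a''), Set.inter_eq_right.mpr (hcL s)]
      exact g_ratio_mul M hpos ⟨tp, htp⟩ s a'' h'
    · rw [hcR a'', hcR s]
      simp
  exact abstract_head
    (fun s h => d ⟨tp, htp⟩ (snoc (t := ⟨tp, htp⟩) sb s) h)
    (fun s a h => M.g ⟨tp, htp⟩ s h / M.g ⟨tp, htp⟩ a h)
    (fun s a h => g' ⟨tp, htp⟩ s h / g' ⟨tp, htp⟩ a h)
    (fun s a h => m ⟨tp, htp⟩ (snoc (t := ⟨tp, htp⟩) sb s) a h)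
    (fun s a h => m' ⟨tp, htp⟩ (snoc (t := ⟨tp, htp⟩) sb s) a h)
    (fun a h => qOf d m' ⟨tp, htp⟩ sb a h)
    (fun a h => qOf d m ⟨tp, htp⟩ sb a h)
    (fun a h => (M.μ (S ∩ M.condEvent ⟨tp, htp⟩ a h)).toReal)
    key2 (fun a h => rfl)

end HeadIdentity

section Reasm

lemma abstract_reasm {α β κ : Type*} [Fintype α] [Fintype β] [Fintype κ]
    (E : κ → Type*) [∀ k, Fintype (E k)] (P : κ → Prop) [DecidablePred P]
    (iw A : α → β → ℝ) (B : (k : κ) → E k → α → β → ℝ) (A' : ℝ) (B' : (k : κ) → E k → ℝ)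
    (hA : (∑ a : α, ∑ h : β, iw a h * A a h) = A')
    (hB : ∀ k e, (∑ a : α, ∑ h : β, iw a h * B k e a h) = B' k e) :
    (∑ a : α, ∑ h : β,
      (iw a h * A a h + ∑ k : κ, if P k then ∑ e : E k, iw a h * B k e a h else 0)) =
      A' + ∑ k : κ, if P k then ∑ e : E k, B' k e else 0 := by
  rw [← hA]
  have h1 : ∀ a : α, (∑ h : β,
      (iw a h * A a h + ∑ k : κ, if P k then ∑ e : E k, iw a h * B k e a h else 0)) =
      (∑ h : β, iw a h * A a h) +
        ∑ h : β, ∑ k : κ, (if P k then ∑ e : E k, iw a h * B k e a h else 0) :=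
    fun a => Finset.sum_add_distrib
  simp only [h1]
  rw [Finset.sum_add_distrib]
  congr 1
  calc ∑ a : α, ∑ h : β, ∑ k : κ, (if P k then ∑ e : E k, iw a h * B k e a h else 0)
      = ∑ a : α, ∑ k : κ, ∑ h : β, (if P k then ∑ e : E k, iw a h * B k e a h else 0) :=
        Finset.sum_congr rfl fun a _ => Finset.sum_comm
    _ = ∑ k : κ, ∑ a : α, ∑ h : β, (if P k then ∑ e : E k, iw a h * B k e a h else 0) :=
        Finset.sum_comm
    _ = ∑ k : κ, (if P k then ∑ e : E k, B' k e else 0) := by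
        refine Finset.sum_congr rfl fun k _ => ?_
        by_cases hk : P k
        · simp only [if_pos hk]
          calc ∑ a : α, ∑ h : β, ∑ e : E k, iw a h * B k e a h
              = ∑ a : α, ∑ e : E k, ∑ h : β, iw a h * B k e a h :=
                Finset.sum_congr rfl fun a _ => Finset.sum_comm
            _ = ∑ e : E k, ∑ a : α, ∑ h : β, iw a h * B k e a h := Finset.sum_comm
            _ = ∑ e : E k, B' k e := Finset.sum_congr rfl fun e _ => hB k e
        · simp only [if_neg hk, Finset.sum_const_zero]

variable {tp : ℕ} (M : Model 𝓐 𝓛 Ω) (d : Policy 𝓐 𝓛)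
  (g' : ∀ t : Fin τ, 𝓐 t → Hist 𝓐 𝓛 t → ℝ)
  (m' mt : ∀ t : Fin τ, SbarN 𝓐 (t.val + 1) → 𝓐 t → Hist 𝓐 𝓛 t → ℝ)

lemma remProd_split (htp : tp < τ) {k : Fin τ} (hk : tp + 1 ≤ k.val)
    (SB : SbarN 𝓐 (k.val + 1)) (ω : Ω) :
    (∏ r : Fin τ, if hr : tp ≤ r.val ∧ r.val < k.val then
        g' r (SB ⟨r, Nat.lt_succ_of_lt hr.2⟩) (M.Hproc r ω) / g' r (M.A r ω) (M.Hproc r ω)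
      else 1) =
    (g' ⟨tp, htp⟩ (SB ⟨⟨tp, htp⟩, Nat.lt_succ_of_lt hk⟩) (M.Hproc ⟨tp, htp⟩ ω) /
        g' ⟨tp, htp⟩ (M.A ⟨tp, htp⟩ ω) (M.Hproc ⟨tp, htp⟩ ω)) *
    ∏ r : Fin τ, if hr : tp + 1 ≤ r.val ∧ r.val < k.val then
        g' r (SB ⟨r, Nat.lt_succ_of_lt hr.2⟩) (M.Hproc r ω) / g' r (M.A r ω) (M.Hproc r ω)
      else 1 := by
  refine (prod_split ⟨tp, htp⟩
    (fun r => if hr : tp ≤ r.val ∧ r.val < k.val then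
      g' r (SB ⟨r, Nat.lt_succ_of_lt hr.2⟩) (M.Hproc r ω) / g' r (M.A r ω) (M.Hproc r ω)
      else 1)
    (fun r => if hr : tp + 1 ≤ r.val ∧ r.val < k.val then
      g' r (SB ⟨r, Nat.lt_succ_of_lt hr.2⟩) (M.Hproc r ω) / g' r (M.A r ω) (M.Hproc r ω)
      else 1) ?_ ?_).trans ?_
  · intro u hu
    have hval : u.val ≠ tp := fun hh => hu (Fin.ext hh)
    by_cases h2 : tp + 1 ≤ u.val ∧ u.val < k.val
    · rw [dif_pos (⟨Nat.le_of_succ_le h2.1, h2.2⟩ : tp ≤ u.val ∧ u.val < k.val), dif_pos h2]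
    · by_cases h1 : tp ≤ u.val ∧ u.val < k.val
      · exact absurd ⟨Nat.lt_of_le_of_ne h1.1 (fun hh => hval hh.symm), h1.2⟩ h2
      · rw [dif_neg h1, dif_neg h2]
  · exact dif_neg (fun hc => Nat.not_succ_le_self tp hc.1)
  · dsimp only
    rw [dif_pos (⟨le_rfl, hk⟩ : tp ≤ (⟨tp, htp⟩ : Fin τ).val ∧ (⟨tp, htp⟩ : Fin τ).val < k.val)]

lemma remProd_nil (htp : tp < τ) (SB : SbarN 𝓐 (tp + 1)) (ω : Ω) :
    (∏ r : Fin τ, if hr : tp ≤ r.val ∧ r.val < (⟨tp, htp⟩ : Fin τ).val then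
        g' r (SB ⟨r, Nat.lt_succ_of_lt hr.2⟩) (M.Hproc r ω) / g' r (M.A r ω) (M.Hproc r ω)
      else 1) = 1 :=
  Finset.prod_eq_one fun r _ =>
    dif_neg (fun hc => absurd (lt_of_le_of_lt hc.1 hc.2) (lt_irrefl tp))

lemma remIntegrand_split (htp : tp < τ) {k : Fin τ} (hk : tp + 1 ≤ k.val) (sb : SbarN 𝓐 tp)
    (s : 𝓐 ⟨tp, htp⟩) (e' : Ext 𝓐 (tp + 1) k) (ω : Ω) :
    remIntegrand M d g' m' mt tp k (mergeExt sb (extCons htp s e')) ω =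
      ((if M.A ⟨tp, htp⟩ ω = d ⟨tp, htp⟩ (snoc (t := ⟨tp, htp⟩) sb s) (M.Hproc ⟨tp, htp⟩ ω)
          then (1:ℝ) else 0) *
        (g' ⟨tp, htp⟩ s (M.Hproc ⟨tp, htp⟩ ω) /
          g' ⟨tp, htp⟩ (M.A ⟨tp, htp⟩ ω) (M.Hproc ⟨tp, htp⟩ ω))) *
      remIntegrand M d g' m' mt (tp + 1) k (mergeExt (snoc (t := ⟨tp, htp⟩) sb s) e') ω := by
  unfold remIntegrand
  rw [mergeExt_extCons htp sb s]
  rw [Dind_split M d htp (Nat.le_of_succ_le hk) (mergeExt (snoc (t := ⟨tp, htp⟩) sb s) e') ω,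
    restrict_mergeExt (Nat.succ_le_succ (Nat.le_of_succ_le hk)) (snoc (t := ⟨tp, htp⟩) sb s) e',
    remProd_split M g' htp hk (mergeExt (snoc (t := ⟨tp, htp⟩) sb s) e') ω,
    mergeExt_lt (u := ⟨tp, htp⟩) (snoc (t := ⟨tp, htp⟩) sb s) e'
      (Nat.lt_succ_of_lt hk) (Nat.lt_succ_self tp),
    snoc_last]
  ring

lemma remIntegrand_last (htp : tp < τ) (sb : SbarN 𝓐 tp) (s : 𝓐 ⟨tp, htp⟩)
    (e' : Ext 𝓐 (tp + 1) ⟨tp, htp⟩) (ω : Ω) :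
    remIntegrand M d g' m' mt tp ⟨tp, htp⟩ (mergeExt sb (extCons htp s e')) ω =
      (if M.A ⟨tp, htp⟩ ω = d ⟨tp, htp⟩ (snoc (t := ⟨tp, htp⟩) sb s) (M.Hproc ⟨tp, htp⟩ ω)
          then (1:ℝ) else 0) *
      (M.g ⟨tp, htp⟩ s (M.Hproc ⟨tp, htp⟩ ω) /
          M.g ⟨tp, htp⟩ (M.A ⟨tp, htp⟩ ω) (M.Hproc ⟨tp, htp⟩ ω) -
        g' ⟨tp, htp⟩ s (M.Hproc ⟨tp, htp⟩ ω) /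
          g' ⟨tp, htp⟩ (M.A ⟨tp, htp⟩ ω) (M.Hproc ⟨tp, htp⟩ ω)) *
      (m' ⟨tp, htp⟩ (snoc (t := ⟨tp, htp⟩) sb s) (M.A ⟨tp, htp⟩ ω) (M.Hproc ⟨tp, htp⟩ ω) -
        mt ⟨tp, htp⟩ (snoc (t := ⟨tp, htp⟩) sb s) (M.A ⟨tp, htp⟩ ω) (M.Hproc ⟨tp, htp⟩ ω)) := by
  unfold remIntegrand
  rw [mergeExt_extCons htp sb s, mergeExt_self htp]
  rw [Dind_last M d htp (snoc (t := ⟨tp, htp⟩) sb s) ω,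
    remProd_nil M g' htp (snoc (t := ⟨tp, htp⟩) sb s) ω, snoc_last]
  ring

end Reasm

section Main

variable (M : Model 𝓐 𝓛 Ω)

lemma main_expansion [∀ t, Nonempty (𝓐 t)] [∀ t, Fintype (𝓛 t)] [∀ t, Nonempty (𝓛 t)]
    [IsProbabilityMeasure M.μ]
    (hmeas : M.Meas) (hbdd : ∃ C, ∀ ω, |M.Y ω| ≤ C) (hpos : M.Positivity)
    (d : Policy 𝓐 𝓛)
    (m : ∀ t : Fin τ, SbarN 𝓐 (t.val + 1) → 𝓐 t → Hist 𝓐 𝓛 t → ℝ) (hm : IsSeqReg M d m)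
    (g' : ∀ t : Fin τ, 𝓐 t → Hist 𝓐 𝓛 t → ℝ)
    (m' : ∀ t : Fin τ, SbarN 𝓐 (t.val + 1) → 𝓐 t → Hist 𝓐 𝓛 t → ℝ) :
    ∀ (n tp : ℕ), τ - tp ≤ n → tp ≤ τ → ∀ (sb : SbarN 𝓐 tp) (S : Set Ω),
      MeasurableSet S →
      (∀ (ht : tp < τ) (h' : Hist 𝓐 𝓛 ⟨tp, ht⟩),
        (∀ a', M.condEvent ⟨tp, ht⟩ a' h' ⊆ S) ∨
        (∀ a', S ∩ M.condEvent ⟨tp, ht⟩ a' h' = ∅)) →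
      ∫ ω in S, phi M d g' m' tp sb ω ∂M.μ =
        (∫ ω in S, Qfun M d m tp sb ω ∂M.μ) + remInt M d g' m' m tp sb S := by
  have hInt : ∀ {X : Ω → ℝ}, histAff M X → Integrable X M.μ :=
    fun hX => histAff_integrable M hmeas hbdd hX
  have base : ∀ (sb : SbarN 𝓐 τ) (S : Set Ω), MeasurableSet S →
      ∫ ω in S, phi M d g' m' τ sb ω ∂M.μ =
        (∫ ω in S, Qfun M d m τ sb ω ∂M.μ) + remInt M d g' m' m τ sb S := by
    intro sb S hS
    have hrem : remInt M d g' m' m τ sb S = 0 :=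
      Finset.sum_eq_zero fun k _ =>
        if_neg (fun hc => absurd (lt_of_le_of_lt hc k.2) (lt_irrefl τ))
    rw [hrem, add_zero]
    refine setIntegral_congr_fun hS fun ω _ => ?_
    rw [phi_eq_T, dif_neg (lt_irrefl τ)]
    rw [Finset.sum_eq_zero fun k _ =>
      if_neg (fun hc => absurd (lt_of_le_of_lt hc k.2) (lt_irrefl τ)), zero_add]
    unfold Qfun
    rw [dif_neg (lt_irrefl τ)]
  intro n
  induction n with
  | zero =>
      intro tp hn htpτ sb S hS _
      have htpe : tp = τ := le_antisymm htpτ (by omega)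
      subst htpe
      exact base sb S hS
  | succ n IH =>
      intro tp hn htpτ sb S hS hcompat
      by_cases htp : tp < τ
      case neg =>
        have htpe : tp = τ := le_antisymm htpτ (by omega)
        subst htpe
        exact base sb S hS
      case pos =>
      -- Step 1: pointwise recursion under the integral
      have hsummandAff : ∀ s : 𝓐 ⟨tp, htp⟩, histAff M (fun ω =>
          (if M.A ⟨tp, htp⟩ ω = d ⟨tp, htp⟩ (snoc (t := ⟨tp, htp⟩) sb s) (M.Hproc ⟨tp, htp⟩ ω)
              then (1:ℝ) else 0) *
            (g' ⟨tp, htp⟩ s (M.Hproc ⟨tp, htp⟩ ω) /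
              g' ⟨tp, htp⟩ (M.A ⟨tp, htp⟩ ω) (M.Hproc ⟨tp, htp⟩ ω)) *
            (phi M d g' m' (tp + 1) (snoc (t := ⟨tp, htp⟩) sb s) ω -
              m' ⟨tp, htp⟩ (snoc (t := ⟨tp, htp⟩) sb s) (M.A ⟨tp, htp⟩ ω)
                (M.Hproc ⟨tp, htp⟩ ω))) := fun s =>
        histFun.mulAff M
          ((histFun_pair M ⟨tp, htp⟩ (fun a h =>
              if a = d ⟨tp, htp⟩ (snoc (t := ⟨tp, htp⟩) sb s) h then (1:ℝ) else 0)).mul M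
            (histFun_pair M ⟨tp, htp⟩ (fun a h => g' ⟨tp, htp⟩ s h / g' ⟨tp, htp⟩ a h)))
          ((histAff_phi M d g' m' (tp + 1) (snoc (t := ⟨tp, htp⟩) sb s)).sub M
            ((histFun_pair M ⟨tp, htp⟩ (fun a h =>
              m' ⟨tp, htp⟩ (snoc (t := ⟨tp, htp⟩) sb s) a h)).toAff M))
      have hIntSum : Integrable (fun ω => ∑ s : 𝓐 ⟨tp, htp⟩,
          (if M.A ⟨tp, htp⟩ ω = d ⟨tp, htp⟩ (snoc (t := ⟨tp, htp⟩) sb s) (M.Hproc ⟨tp, htp⟩ ω)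
              then (1:ℝ) else 0) *
            (g' ⟨tp, htp⟩ s (M.Hproc ⟨tp, htp⟩ ω) /
              g' ⟨tp, htp⟩ (M.A ⟨tp, htp⟩ ω) (M.Hproc ⟨tp, htp⟩ ω)) *
            (phi M d g' m' (tp + 1) (snoc (t := ⟨tp, htp⟩) sb s) ω -
              m' ⟨tp, htp⟩ (snoc (t := ⟨tp, htp⟩) sb s) (M.A ⟨tp, htp⟩ ω)
                (M.Hproc ⟨tp, htp⟩ ω))) M.μ :=
        hInt (histAff_sum M Finset.univ _ (fun s _ => hsummandAff s))
      have hIntQ' : Integrable (fun ω =>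
          qOf d m' ⟨tp, htp⟩ sb (M.A ⟨tp, htp⟩ ω) (M.Hproc ⟨tp, htp⟩ ω)) M.μ :=
        hInt ((histFun_pair M ⟨tp, htp⟩ (fun a h => qOf d m' ⟨tp, htp⟩ sb a h)).toAff M)
      have h1 : ∫ ω in S, phi M d g' m' tp sb ω ∂M.μ =
          (∑ s : 𝓐 ⟨tp, htp⟩, ∫ ω in S,
            (if M.A ⟨tp, htp⟩ ω = d ⟨tp, htp⟩ (snoc (t := ⟨tp, htp⟩) sb s)
                (M.Hproc ⟨tp, htp⟩ ω) then (1:ℝ) else 0) *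
              (g' ⟨tp, htp⟩ s (M.Hproc ⟨tp, htp⟩ ω) /
                g' ⟨tp, htp⟩ (M.A ⟨tp, htp⟩ ω) (M.Hproc ⟨tp, htp⟩ ω)) *
              (phi M d g' m' (tp + 1) (snoc (t := ⟨tp, htp⟩) sb s) ω -
                m' ⟨tp, htp⟩ (snoc (t := ⟨tp, htp⟩) sb s) (M.A ⟨tp, htp⟩ ω)
                  (M.Hproc ⟨tp, htp⟩ ω)) ∂M.μ) +
          ∫ ω in S, qOf d m' ⟨tp, htp⟩ sb (M.A ⟨tp, htp⟩ ω) (M.Hproc ⟨tp, htp⟩ ω) ∂M.μ := by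
        refine (setIntegral_congr_fun hS fun ω _ => phi_succ M d g' m' htp sb ω).trans ?_
        rw [integral_add hIntSum.restrict hIntQ'.restrict]
        congr 1
        exact integral_finset_sum Finset.univ (fun s _ => (hInt (hsummandAff s)).restrict)
      rw [h1]
      -- reassembly helper
      have hreasm : ∀ (s : 𝓐 ⟨tp, htp⟩) (X : Ω → ℝ), histAff M X →
          (∑ a' : 𝓐 ⟨tp, htp⟩, ∑ h' : Hist 𝓐 𝓛 ⟨tp, htp⟩,
            ((if a' = d ⟨tp, htp⟩ (snoc (t := ⟨tp, htp⟩) sb s) h' then (1:ℝ) else 0) *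
              (g' ⟨tp, htp⟩ s h' / g' ⟨tp, htp⟩ a' h')) *
            ∫ ω in S ∩ M.condEvent ⟨tp, htp⟩ a' h', X ω ∂M.μ) =
          ∫ ω in S, ((if M.A ⟨tp, htp⟩ ω = d ⟨tp, htp⟩ (snoc (t := ⟨tp, htp⟩) sb s)
              (M.Hproc ⟨tp, htp⟩ ω) then (1:ℝ) else 0) *
            (g' ⟨tp, htp⟩ s (M.Hproc ⟨tp, htp⟩ ω) /
              g' ⟨tp, htp⟩ (M.A ⟨tp, htp⟩ ω) (M.Hproc ⟨tp, htp⟩ ω))) * X ω ∂M.μ := by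
        intro s X hX
        rw [setIntegral_partition M hmeas ⟨tp, htp⟩ hS (hInt (histFun.mulAff M
          (histFun_pair M ⟨tp, htp⟩ (fun a h =>
            (if a = d ⟨tp, htp⟩ (snoc (t := ⟨tp, htp⟩) sb s) h then (1:ℝ) else 0) *
              (g' ⟨tp, htp⟩ s h / g' ⟨tp, htp⟩ a h))) hX))]
        exact Finset.sum_congr rfl fun a' _ => Finset.sum_congr rfl fun h' _ =>
          (setIntegral_pair_mul M ⟨tp, htp⟩
            (hS.inter (measurableSet_condEvent M hmeas _ _ _)) Set.inter_subset_right
            (fun a h => (if a = d ⟨tp, htp⟩ (snoc (t := ⟨tp, htp⟩) sb s) h then (1:ℝ) else 0) *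
              (g' ⟨tp, htp⟩ s h / g' ⟨tp, htp⟩ a h)) X).symm
      -- Step 3: partition, apply IH, reassemble
      have h3 : ∀ s : 𝓐 ⟨tp, htp⟩,
          (∫ ω in S,
            (if M.A ⟨tp, htp⟩ ω = d ⟨tp, htp⟩ (snoc (t := ⟨tp, htp⟩) sb s)
                (M.Hproc ⟨tp, htp⟩ ω) then (1:ℝ) else 0) *
              (g' ⟨tp, htp⟩ s (M.Hproc ⟨tp, htp⟩ ω) /
                g' ⟨tp, htp⟩ (M.A ⟨tp, htp⟩ ω) (M.Hproc ⟨tp, htp⟩ ω)) *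
              (phi M d g' m' (tp + 1) (snoc (t := ⟨tp, htp⟩) sb s) ω -
                m' ⟨tp, htp⟩ (snoc (t := ⟨tp, htp⟩) sb s) (M.A ⟨tp, htp⟩ ω)
                  (M.Hproc ⟨tp, htp⟩ ω)) ∂M.μ) =
          (∫ ω in S, ((if M.A ⟨tp, htp⟩ ω = d ⟨tp, htp⟩ (snoc (t := ⟨tp, htp⟩) sb s)
              (M.Hproc ⟨tp, htp⟩ ω) then (1:ℝ) else 0) *
            (g' ⟨tp, htp⟩ s (M.Hproc ⟨tp, htp⟩ ω) /
              g' ⟨tp, htp⟩ (M.A ⟨tp, htp⟩ ω) (M.Hproc ⟨tp, htp⟩ ω))) *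
            (m ⟨tp, htp⟩ (snoc (t := ⟨tp, htp⟩) sb s) (M.A ⟨tp, htp⟩ ω) (M.Hproc ⟨tp, htp⟩ ω) -
              m' ⟨tp, htp⟩ (snoc (t := ⟨tp, htp⟩) sb s) (M.A ⟨tp, htp⟩ ω)
                (M.Hproc ⟨tp, htp⟩ ω)) ∂M.μ) +
          ∑ k : Fin τ, if tp + 1 ≤ k.val then ∑ e' : Ext 𝓐 (tp + 1) k,
            ∫ ω in S, ((if M.A ⟨tp, htp⟩ ω = d ⟨tp, htp⟩ (snoc (t := ⟨tp, htp⟩) sb s)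
                (M.Hproc ⟨tp, htp⟩ ω) then (1:ℝ) else 0) *
              (g' ⟨tp, htp⟩ s (M.Hproc ⟨tp, htp⟩ ω) /
                g' ⟨tp, htp⟩ (M.A ⟨tp, htp⟩ ω) (M.Hproc ⟨tp, htp⟩ ω))) *
              remIntegrand M d g' m' m (tp + 1) k
                (mergeExt (snoc (t := ⟨tp, htp⟩) sb s) e') ω ∂M.μ
            else 0 := by
        intro s
        have hpiece : ∀ (a' : 𝓐 ⟨tp, htp⟩) (h' : Hist 𝓐 𝓛 ⟨tp, htp⟩),
            (∫ ω in S ∩ M.condEvent ⟨tp, htp⟩ a' h',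
              (phi M d g' m' (tp + 1) (snoc (t := ⟨tp, htp⟩) sb s) ω -
                m' ⟨tp, htp⟩ (snoc (t := ⟨tp, htp⟩) sb s) (M.A ⟨tp, htp⟩ ω)
                  (M.Hproc ⟨tp, htp⟩ ω)) ∂M.μ) =
            (∫ ω in S ∩ M.condEvent ⟨tp, htp⟩ a' h',
              (m ⟨tp, htp⟩ (snoc (t := ⟨tp, htp⟩) sb s) (M.A ⟨tp, htp⟩ ω)
                  (M.Hproc ⟨tp, htp⟩ ω) -
                m' ⟨tp, htp⟩ (snoc (t := ⟨tp, htp⟩) sb s) (M.A ⟨tp, htp⟩ ω)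
                  (M.Hproc ⟨tp, htp⟩ ω)) ∂M.μ) +
            ∑ k : Fin τ, if tp + 1 ≤ k.val then ∑ e' : Ext 𝓐 (tp + 1) k,
              ∫ ω in S ∩ M.condEvent ⟨tp, htp⟩ a' h',
                remIntegrand M d g' m' m (tp + 1) k
                  (mergeExt (snoc (t := ⟨tp, htp⟩) sb s) e') ω ∂M.μ
              else 0 := by
          intro a' h'
          have hIntPhi : Integrable (phi M d g' m' (tp + 1) (snoc (t := ⟨tp, htp⟩) sb s)) M.μ :=
            hInt (histAff_phi M d g' m' (tp + 1) (snoc (t := ⟨tp, htp⟩) sb s))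
          have hIntm' : Integrable (fun ω => m' ⟨tp, htp⟩ (snoc (t := ⟨tp, htp⟩) sb s)
              (M.A ⟨tp, htp⟩ ω) (M.Hproc ⟨tp, htp⟩ ω)) M.μ :=
            hInt ((histFun_pair M ⟨tp, htp⟩ (fun a h =>
              m' ⟨tp, htp⟩ (snoc (t := ⟨tp, htp⟩) sb s) a h)).toAff M)
          have hIntm : Integrable (fun ω => m ⟨tp, htp⟩ (snoc (t := ⟨tp, htp⟩) sb s)
              (M.A ⟨tp, htp⟩ ω) (M.Hproc ⟨tp, htp⟩ ω)) M.μ :=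
            hInt ((histFun_pair M ⟨tp, htp⟩ (fun a h =>
              m ⟨tp, htp⟩ (snoc (t := ⟨tp, htp⟩) sb s) a h)).toAff M)
          rcases hcompat htp h' with hcL | hcR
          · have hSN : S ∩ M.condEvent ⟨tp, htp⟩ a' h' = M.condEvent ⟨tp, htp⟩ a' h' :=
              Set.inter_eq_right.mpr (hcL a')
            rw [hSN]
            rw [integral_sub hIntPhi.restrict hIntm'.restrict,
              integral_sub hIntm.restrict hIntm'.restrict]
            have hIH := IH (tp + 1) (by omega) (by omega) (snoc (t := ⟨tp, htp⟩) sb s)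
              (M.condEvent ⟨tp, htp⟩ a' h') (measurableSet_condEvent M hmeas ⟨tp, htp⟩ a' h')
              (fun ht' h'' => compat_step M htp a' h' ht' h'')
            rw [hIH]
            have hQ : ∫ ω in M.condEvent ⟨tp, htp⟩ a' h',
                Qfun M d m (tp + 1) (snoc (t := ⟨tp, htp⟩) sb s) ω ∂M.μ =
                ∫ ω in M.condEvent ⟨tp, htp⟩ a' h',
                  m ⟨tp, htp⟩ (snoc (t := ⟨tp, htp⟩) sb s) (M.A ⟨tp, htp⟩ ω)
                    (M.Hproc ⟨tp, htp⟩ ω) ∂M.μ := by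
              have hq1 : ∫ ω in M.condEvent ⟨tp, htp⟩ a' h',
                  Qfun M d m (tp + 1) (snoc (t := ⟨tp, htp⟩) sb s) ω ∂M.μ =
                  ∫ ω in M.condEvent ⟨tp, htp⟩ a' h',
                    M.qNext (qOf d m) ⟨tp, htp⟩ (snoc (t := ⟨tp, htp⟩) sb s) ω ∂M.μ := rfl
              rw [hq1, qNext_setIntegral M hpos d m hm ⟨tp, htp⟩
                (snoc (t := ⟨tp, htp⟩) sb s) a' h',
                setIntegral_pair M ⟨tp, htp⟩ (measurableSet_condEvent M hmeas _ _ _)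
                  (subset_refl _) (fun a h => m ⟨tp, htp⟩ (snoc (t := ⟨tp, htp⟩) sb s) a h)]
            rw [hQ]
            have hremdef : remInt M d g' m' m (tp + 1) (snoc (t := ⟨tp, htp⟩) sb s)
                (M.condEvent ⟨tp, htp⟩ a' h') =
                ∑ k : Fin τ, if tp + 1 ≤ k.val then ∑ e' : Ext 𝓐 (tp + 1) k,
                  ∫ ω in M.condEvent ⟨tp, htp⟩ a' h',
                    remIntegrand M d g' m' m (tp + 1) k
                      (mergeExt (snoc (t := ⟨tp, htp⟩) sb s) e') ω ∂M.μ
                  else 0 := rfl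
            rw [hremdef]
            ring
          · have hSN : S ∩ M.condEvent ⟨tp, htp⟩ a' h' = ∅ := hcR a'
            rw [hSN]
            simp only [Measure.restrict_empty, integral_zero_measure,
              Finset.sum_const_zero, ite_self, add_zero]
        have hterm : ∀ (a' : 𝓐 ⟨tp, htp⟩) (h' : Hist 𝓐 𝓛 ⟨tp, htp⟩),
            (∫ ω in S ∩ M.condEvent ⟨tp, htp⟩ a' h',
              (if M.A ⟨tp, htp⟩ ω = d ⟨tp, htp⟩ (snoc (t := ⟨tp, htp⟩) sb s)
                  (M.Hproc ⟨tp, htp⟩ ω) then (1:ℝ) else 0) *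
                (g' ⟨tp, htp⟩ s (M.Hproc ⟨tp, htp⟩ ω) /
                  g' ⟨tp, htp⟩ (M.A ⟨tp, htp⟩ ω) (M.Hproc ⟨tp, htp⟩ ω)) *
                (phi M d g' m' (tp + 1) (snoc (t := ⟨tp, htp⟩) sb s) ω -
                  m' ⟨tp, htp⟩ (snoc (t := ⟨tp, htp⟩) sb s) (M.A ⟨tp, htp⟩ ω)
                    (M.Hproc ⟨tp, htp⟩ ω)) ∂M.μ) =
            ((if a' = d ⟨tp, htp⟩ (snoc (t := ⟨tp, htp⟩) sb s) h' then (1:ℝ) else 0) *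
              (g' ⟨tp, htp⟩ s h' / g' ⟨tp, htp⟩ a' h')) *
              (∫ ω in S ∩ M.condEvent ⟨tp, htp⟩ a' h',
                (m ⟨tp, htp⟩ (snoc (t := ⟨tp, htp⟩) sb s) (M.A ⟨tp, htp⟩ ω)
                    (M.Hproc ⟨tp, htp⟩ ω) -
                  m' ⟨tp, htp⟩ (snoc (t := ⟨tp, htp⟩) sb s) (M.A ⟨tp, htp⟩ ω)
                    (M.Hproc ⟨tp, htp⟩ ω)) ∂M.μ) +
            ∑ k : Fin τ, if tp + 1 ≤ k.val then ∑ e' : Ext 𝓐 (tp + 1) k,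
              ((if a' = d ⟨tp, htp⟩ (snoc (t := ⟨tp, htp⟩) sb s) h' then (1:ℝ) else 0) *
                (g' ⟨tp, htp⟩ s h' / g' ⟨tp, htp⟩ a' h')) *
                ∫ ω in S ∩ M.condEvent ⟨tp, htp⟩ a' h',
                  remIntegrand M d g' m' m (tp + 1) k
                    (mergeExt (snoc (t := ⟨tp, htp⟩) sb s) e') ω ∂M.μ
              else 0 := by
          intro a' h'
          refine (setIntegral_pair_mul M ⟨tp, htp⟩
            (hS.inter (measurableSet_condEvent M hmeas _ _ _)) Set.inter_subset_right
            (fun a h => (if a = d ⟨tp, htp⟩ (snoc (t := ⟨tp, htp⟩) sb s) h then (1:ℝ) else 0) *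
              (g' ⟨tp, htp⟩ s h / g' ⟨tp, htp⟩ a h))
            (fun ω => phi M d g' m' (tp + 1) (snoc (t := ⟨tp, htp⟩) sb s) ω -
              m' ⟨tp, htp⟩ (snoc (t := ⟨tp, htp⟩) sb s) (M.A ⟨tp, htp⟩ ω)
                (M.Hproc ⟨tp, htp⟩ ω))).trans ?_
          rw [hpiece a' h']
          simp only [mul_add, Finset.mul_sum, mul_ite, mul_zero]
        refine (setIntegral_partition M hmeas ⟨tp, htp⟩ hS (hInt (hsummandAff s))).trans ?_
        refine (Finset.sum_congr rfl fun a' _ =>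
          Finset.sum_congr rfl fun h' _ => hterm a' h').trans ?_
        exact abstract_reasm (fun k => Ext 𝓐 (tp + 1) k) (fun k => tp + 1 ≤ k.val) _ _ _ _ _
          (hreasm s _ (((histFun_pair M ⟨tp, htp⟩ (fun a h =>
              m ⟨tp, htp⟩ (snoc (t := ⟨tp, htp⟩) sb s) a h -
                m' ⟨tp, htp⟩ (snoc (t := ⟨tp, htp⟩) sb s) a h))).toAff M))
          (fun k e' => hreasm s _ ((histFun_remIntegrand M d g' m' m (tp + 1) k
            (mergeExt (snoc (t := ⟨tp, htp⟩) sb s) e')).toAff M))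
      simp only [h3]
      rw [Finset.sum_add_distrib]
      -- Step 4: split remInt at k = tp and rewrite the head and tail
      have hfg' : ∀ u : Fin τ, u ≠ ⟨tp, htp⟩ →
          (if tp ≤ u.val then ∑ e : Ext 𝓐 tp u,
            ∫ ω in S, remIntegrand M d g' m' m tp u (mergeExt sb e) ω ∂M.μ else 0) =
          (if tp + 1 ≤ u.val then ∑ e : Ext 𝓐 tp u,
            ∫ ω in S, remIntegrand M d g' m' m tp u (mergeExt sb e) ω ∂M.μ else 0) := by
        intro u hu
        have hval : u.val ≠ tp := fun hh => hu (Fin.ext hh)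
        by_cases h2 : tp + 1 ≤ u.val
        · rw [if_pos (Nat.le_of_succ_le h2), if_pos h2]
        · rw [if_neg (by omega), if_neg h2]
      have hg0' : (if tp + 1 ≤ (⟨tp, htp⟩ : Fin τ).val then
          ∑ e : Ext 𝓐 tp ⟨tp, htp⟩,
            ∫ ω in S, remIntegrand M d g' m' m tp ⟨tp, htp⟩ (mergeExt sb e) ω ∂M.μ else 0)
          = 0 := if_neg (fun hc => Nat.not_succ_le_self tp hc)
      have hremsplit : remInt M d g' m' m tp sb S =
          (∑ e : Ext 𝓐 tp ⟨tp, htp⟩,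
            ∫ ω in S, remIntegrand M d g' m' m tp ⟨tp, htp⟩ (mergeExt sb e) ω ∂M.μ) +
          ∑ k : Fin τ, if tp + 1 ≤ k.val then ∑ e : Ext 𝓐 tp k,
            ∫ ω in S, remIntegrand M d g' m' m tp k (mergeExt sb e) ω ∂M.μ else 0 := by
        unfold remInt
        rw [sum_split ⟨tp, htp⟩ _ _ hfg' hg0', if_pos (le_rfl : tp ≤ tp)]
      rw [hremsplit]
      have hheadrem : (∑ e : Ext 𝓐 tp ⟨tp, htp⟩,
          ∫ ω in S, remIntegrand M d g' m' m tp ⟨tp, htp⟩ (mergeExt sb e) ω ∂M.μ) =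
          ∑ s : 𝓐 ⟨tp, htp⟩, ∫ ω in S,
            (if M.A ⟨tp, htp⟩ ω = d ⟨tp, htp⟩ (snoc (t := ⟨tp, htp⟩) sb s)
                (M.Hproc ⟨tp, htp⟩ ω) then (1:ℝ) else 0) *
            (M.g ⟨tp, htp⟩ s (M.Hproc ⟨tp, htp⟩ ω) /
                M.g ⟨tp, htp⟩ (M.A ⟨tp, htp⟩ ω) (M.Hproc ⟨tp, htp⟩ ω) -
              g' ⟨tp, htp⟩ s (M.Hproc ⟨tp, htp⟩ ω) /
                g' ⟨tp, htp⟩ (M.A ⟨tp, htp⟩ ω) (M.Hproc ⟨tp, htp⟩ ω)) *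
            (m' ⟨tp, htp⟩ (snoc (t := ⟨tp, htp⟩) sb s) (M.A ⟨tp, htp⟩ ω)
                (M.Hproc ⟨tp, htp⟩ ω) -
              m ⟨tp, htp⟩ (snoc (t := ⟨tp, htp⟩) sb s) (M.A ⟨tp, htp⟩ ω)
                (M.Hproc ⟨tp, htp⟩ ω)) ∂M.μ := by
        rw [sum_extCons htp (k := ⟨tp, htp⟩) le_rfl]
        refine Finset.sum_congr rfl fun s _ => ?_
        haveI : IsEmpty {u : Fin τ // tp + 1 ≤ u.val ∧ u.val ≤ (⟨tp, htp⟩ : Fin τ).val} :=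
          extEmpty htp
        rw [Fintype.sum_unique]
        exact setIntegral_congr_fun hS fun ω _ =>
          remIntegrand_last M d g' m' m htp sb s default ω
      rw [hheadrem]
      have htailrem : ∀ k : Fin τ,
          (if tp + 1 ≤ k.val then ∑ e : Ext 𝓐 tp k,
            ∫ ω in S, remIntegrand M d g' m' m tp k (mergeExt sb e) ω ∂M.μ else 0) =
          (if tp + 1 ≤ k.val then ∑ s : 𝓐 ⟨tp, htp⟩, ∑ e' : Ext 𝓐 (tp + 1) k,
            ∫ ω in S, ((if M.A ⟨tp, htp⟩ ω = d ⟨tp, htp⟩ (snoc (t := ⟨tp, htp⟩) sb s)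
                (M.Hproc ⟨tp, htp⟩ ω) then (1:ℝ) else 0) *
              (g' ⟨tp, htp⟩ s (M.Hproc ⟨tp, htp⟩ ω) /
                g' ⟨tp, htp⟩ (M.A ⟨tp, htp⟩ ω) (M.Hproc ⟨tp, htp⟩ ω))) *
              remIntegrand M d g' m' m (tp + 1) k
                (mergeExt (snoc (t := ⟨tp, htp⟩) sb s) e') ω ∂M.μ else 0) := by
        intro k
        by_cases hk : tp + 1 ≤ k.val
        · rw [if_pos hk, if_pos hk, sum_extCons htp (Nat.le_of_succ_le hk)]
          refine Finset.sum_congr rfl fun s _ => Finset.sum_congr rfl fun e' _ => ?_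
          exact setIntegral_congr_fun hS fun ω _ =>
            remIntegrand_split M d g' m' m htp hk sb s e' ω
        · rw [if_neg hk, if_neg hk]
      simp only [htailrem]
      have hswap : (∑ s : 𝓐 ⟨tp, htp⟩, ∑ k : Fin τ,
          if tp + 1 ≤ k.val then ∑ e' : Ext 𝓐 (tp + 1) k,
            ∫ ω in S, ((if M.A ⟨tp, htp⟩ ω = d ⟨tp, htp⟩ (snoc (t := ⟨tp, htp⟩) sb s)
                (M.Hproc ⟨tp, htp⟩ ω) then (1:ℝ) else 0) *
              (g' ⟨tp, htp⟩ s (M.Hproc ⟨tp, htp⟩ ω) /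
                g' ⟨tp, htp⟩ (M.A ⟨tp, htp⟩ ω) (M.Hproc ⟨tp, htp⟩ ω))) *
              remIntegrand M d g' m' m (tp + 1) k
                (mergeExt (snoc (t := ⟨tp, htp⟩) sb s) e') ω ∂M.μ else 0) =
          ∑ k : Fin τ, if tp + 1 ≤ k.val then ∑ s : 𝓐 ⟨tp, htp⟩, ∑ e' : Ext 𝓐 (tp + 1) k,
            ∫ ω in S, ((if M.A ⟨tp, htp⟩ ω = d ⟨tp, htp⟩ (snoc (t := ⟨tp, htp⟩) sb s)
                (M.Hproc ⟨tp, htp⟩ ω) then (1:ℝ) else 0) *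
              (g' ⟨tp, htp⟩ s (M.Hproc ⟨tp, htp⟩ ω) /
                g' ⟨tp, htp⟩ (M.A ⟨tp, htp⟩ ω) (M.Hproc ⟨tp, htp⟩ ω))) *
              remIntegrand M d g' m' m (tp + 1) k
                (mergeExt (snoc (t := ⟨tp, htp⟩) sb s) e') ω ∂M.μ else 0 := by
        rw [Finset.sum_comm]
        refine Finset.sum_congr rfl fun k _ => ?_
        by_cases hk : tp + 1 ≤ k.val
        · simp only [if_pos hk]
        · simp only [if_neg hk, Finset.sum_const_zero]
      rw [hswap]
      -- Step 5: conclude with the head identity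
      have hQfun : ∫ ω in S, Qfun M d m tp sb ω ∂M.μ =
          ∫ ω in S, qOf d m ⟨tp, htp⟩ sb (M.A ⟨tp, htp⟩ ω) (M.Hproc ⟨tp, htp⟩ ω) ∂M.μ := by
        refine setIntegral_congr_fun hS fun ω _ => ?_
        unfold Qfun
        rw [dif_pos htp]
      rw [hQfun]
      have hhead := head_identity M d m m' g' hmeas hbdd hpos htp sb hS
        (fun h' => hcompat htp h')
      linarith [hhead]

end Main

/-- **Conditional von Mises expansion** (Theorem 2 of the paper).
For every paper-time `t ∈ {0, 1, …, τ-1}`, every `s̄_t` and every `(a_t, h_t)`: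
`E[φ_{t+1}(s̄_t, Z; η') ∣ A_t = a_t, H_t = h_t] = m_t(s̄_t, a_t, h_t) + Rem_t(s̄_t, a_t, h_t; η')`,
with the conditioning omitted at `t = 0`, where `m_0 = θ = E[q_1(A_1, H_1)]`.
Internally times are 0-based: the paper's time `t ≥ 1` is the index `j` with `j + 1 = t`
paper-steps, i.e. paper `t = j.val + 1`. -/
theorem conditional_von_Mises_expansion
    [∀ t, Nonempty (𝓐 t)] [∀ t, Fintype (𝓛 t)] [∀ t, Nonempty (𝓛 t)]
    (hτ : 0 < τ)
    (M : Model 𝓐 𝓛 Ω) [IsProbabilityMeasure M.μ]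
    (hmeas : M.Meas) (hbdd : ∃ C, ∀ ω, |M.Y ω| ≤ C)
    (hpos : M.Positivity)
    (d : Policy 𝓐 𝓛)
    -- the true sequential regression functions
    (m : ∀ t : Fin τ, SbarN 𝓐 (t.val + 1) → 𝓐 t → Hist 𝓐 𝓛 t → ℝ)
    (hm : IsSeqReg M d m)
    -- arbitrary nuisance values η' = (g'_t, m'_t)
    (g' : ∀ t : Fin τ, 𝓐 t → Hist 𝓐 𝓛 t → ℝ)
    (hg' : ∀ (t : Fin τ) (a : 𝓐 t) (h : Hist 𝓐 𝓛 t), 0 < g' t a h)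
    (m' : ∀ t : Fin τ, SbarN 𝓐 (t.val + 1) → 𝓐 t → Hist 𝓐 𝓛 t → ℝ) :
    -- paper time t = j.val + 1 ∈ {1, …, τ-1}: conditional expansion
    (∀ (j : Fin τ), j.val + 1 < τ →
      ∀ (sb : SbarN 𝓐 (j.val + 1)) (a : 𝓐 j) (h : Hist 𝓐 𝓛 j),
        condExpOn M.μ (M.condEvent j a h) (phi M d g' m' (j.val + 1) sb) =
          m j sb a h + rem M d g' m' m (j.val + 1) sb (M.condEvent j a h)) ∧
    -- paper time t = 0: unconditional expansion, with m_0 = θ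
    ((∫ ω, phi M d g' m' 0 (emptySbar 𝓐) ω ∂M.μ) =
      theta hτ M d m + rem M d g' m' m 0 (emptySbar 𝓐) Set.univ) := by
  constructor
  · intro j hj sb a h
    have hS := measurableSet_condEvent M hmeas j a h
    have hmain := main_expansion M hmeas hbdd hpos d m hm g' m' τ (j.val + 1) (by omega)
      (by omega) sb (M.condEvent j a h) hS
      (fun ht h' => compat_step M j.2 a h ht h')
    unfold condExpOn
    rw [hmain, rem_eq_remInt M d g' m' m (j.val + 1) sb (M.condEvent j a h), add_div]
    congr 1
    have hq : ∫ ω in M.condEvent j a h, Qfun M d m (j.val + 1) sb ω ∂M.μ =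
        ∫ ω in M.condEvent j a h, M.qNext (qOf d m) j sb ω ∂M.μ := rfl
    rw [hq]
    exact (hm j sb a h).symm
  · have hmain := main_expansion M hmeas hbdd hpos d m hm g' m' τ 0 (by omega) (by omega)
      (emptySbar 𝓐) Set.univ MeasurableSet.univ
      (fun ht h' => Or.inl (fun a' => Set.subset_univ _))
    rw [← setIntegral_univ, hmain]
    have h1 : ∫ ω in Set.univ, Qfun M d m 0 (emptySbar 𝓐) ω ∂M.μ = theta hτ M d m := by
      rw [setIntegral_univ]
      unfold theta
      exact integral_congr_ae (Filter.Eventually.of_forall fun ω => dif_pos hτ)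
    have h2 : rem M d g' m' m 0 (emptySbar 𝓐) Set.univ =
        remInt M d g' m' m 0 (emptySbar 𝓐) Set.univ := by
      rw [rem_eq_remInt]
      simp
    rw [h1, h2]


end GLMTP
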